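/- arXiv:1611.01523 — 10 statements merged into one kernel-verified Lean document; each statement's English description precedes it below -/
import Mathlib

section
/- Let V be a finite type and G a simple graph on V. Let S be the subgroup of the symmetric group Perm(V) generated by the transpositions (a b) over all edges {a,b} of G (the swap group of G). Then a permutation g of V belongs to S if and only if for every vertex v, the vertex g(v) is reachable from v in G. (Equivalently, the swap group of G is the direct product of the full symmetric groups of the connected components of G.) -/
/-!
Edge transpositions move each vertex to a neighbour, so the swap group preserves components.
Conversely, along a walk from `u` to `v` the transposition `(u v)` is a product of edge
transpositions, so the orbits of the swap group are exactly the components; and a group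
generated by transpositions contains every finitely supported permutation that keeps each
point inside its orbit (`Equiv.Perm.mem_closure_isSwap`).
-/

open Equiv Equiv.Perm Subgroup

namespace SimpleGraph

variable {V : Type*} (G : SimpleGraph V)

def reachablePerms : Subgroup (Perm V) where
  carrier := {σ | ∀ v, G.Reachable v (σ v)}
  one_mem' v := Reachable.refl v
  mul_mem' hσ hτ v := (hτ v).trans (hσ _)
  inv_mem' {σ} hσ v := by simpa using (hσ (σ⁻¹ v)).symm

variable [DecidableEq V]

def edgeSwaps : Set (Perm V) :=
  {σ | ∃ a b : V, G.Adj a b ∧ σ = swap a b}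

def swapGroup : Subgroup (Perm V) :=
  closure G.edgeSwaps

lemma isSwap_of_mem_edgeSwaps : ∀ σ ∈ G.edgeSwaps, σ.IsSwap := by
  rintro _ ⟨a, b, hab, rfl⟩
  exact ⟨a, b, hab.ne, rfl⟩

lemma swapGroup_le_reachablePerms : G.swapGroup ≤ G.reachablePerms := by
  refine (closure_le _).2 ?_
  rintro _ ⟨a, b, hab, rfl⟩ v
  rcases eq_or_ne v a with rfl | hva
  · simpa using hab.reachable
  rcases eq_or_ne v b with rfl | hvb
  · simpa using hab.symm.reachable
  · rw [swap_apply_of_ne_of_ne hva hvb]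

lemma swap_mem_swapGroup_of_reachable {u v : V} (h : G.Reachable u v) :
    swap u v ∈ G.swapGroup := by
  obtain ⟨p⟩ := h
  induction p with
  | nil => rw [swap_self]; exact one_mem _
  | cons hax _ ih => exact SubmonoidClass.swap_mem_trans _ (subset_closure ⟨_, _, hax, rfl⟩) ih

lemma swapGroup_eq_reachablePerms [Finite V] : G.swapGroup = G.reachablePerms := by
  refine le_antisymm G.swapGroup_le_reachablePerms fun g hg => ?_
  refine (mem_closure_isSwap G.isSwap_of_mem_edgeSwaps).2 ⟨Set.toFinite _, fun x => ?_⟩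
  exact ⟨⟨swap x (g x), G.swap_mem_swapGroup_of_reachable (hg x)⟩, swap_apply_left x (g x)⟩

end SimpleGraph

/-- **Swap group of a graph.**
Let `V` be a finite type and `G` a simple graph on `V`.  The subgroup of `Perm V`
generated by the transpositions `(a b)` over the edges of `G` (the *swap group* of `G`)
consists exactly of those permutations `g` such that `g v` is reachable from `v` in `G`
for every vertex `v`; i.e. the swap group is the direct product of the symmetric groups
of the connected components of `G`. -/
theorem swapGroup_mem_iff_reachable {V : Type*} [Fintype V] [DecidableEq V]
    (G : SimpleGraph V) (g : Equiv.Perm V) :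
    g ∈ Subgroup.closure
        {σ : Equiv.Perm V | ∃ a b : V, G.Adj a b ∧ σ = Equiv.swap a b} ↔
      ∀ v : V, G.Reachable v (g v) :=
  SetLike.ext_iff.mp G.swapGroup_eq_reachablePerms g
end

section
/- Let V be a finite type and E a collection of 3-element subsets of V (a 3-hypergraph on V). Call two vertices a, b adjacent if a ≠ b and some hyperedge e ∈ E contains both, and let reachability be the reflexive-transitive closure of this adjacency. Let S be the subgroup of Perm(V) generated by all 3-cycles (a b c) with {a,b,c} ∈ E. Then a permutation g of V belongs to S if and only if (i) for every v, g(v) is reachable from v, and (ii) for every v, the restriction of g to the connected component {u : V | u reachable from v} (which is invariant under g by (i)) is an even permutation of that component. (Equivalently, S is the direct product of the alternating groups of the connected components.) -/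
/-! Each generator is an even permutation moving only the three points of one hyperedge, so
the cycling group lies in the subgroup of permutations that preserve every component and are even
on each. Conversely, the triples whose 3-cycle lies in the cycling group are permuted by
conjugation with its elements; conjugating by the generator on a hyperedge `{c, d, w}` replaces
`c` by `d` in such a triple, so triples can be slid along paths and every 3-cycle inside a component
lies in the cycling group. Finally, an even permutation `g` of a component moving `a` also moves
some `c ∉ {a, g a}`, and multiplying `g` by the inverse of the 3-cycle `(a (g a) c)` shrinks its
support. -/

open scoped Classical

def hyperAdj {V : Type*} (E : Set (Finset V)) (a b : V) : Prop :=
  a ≠ b ∧ ∃ e ∈ E, a ∈ e ∧ b ∈ e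

open Equiv Perm

section ThreeCycle

variable {α : Type*} [DecidableEq α] {a b c x : α}

/-- The 3-cycle `a ↦ b ↦ c ↦ a`. -/
def threeCycle (a b c : α) : Perm α := swap a c * swap a b

theorem threeCycle_apply_left (hba : b ≠ a) (hbc : b ≠ c) : threeCycle a b c a = b := by
  simp [threeCycle, swap_apply_of_ne_of_ne hba hbc]

theorem threeCycle_apply_mid : threeCycle a b c b = c := by
  simp [threeCycle]

theorem threeCycle_apply_right (hca : c ≠ a) (hcb : c ≠ b) : threeCycle a b c c = a := by
  simp [threeCycle, swap_apply_of_ne_of_ne hca hcb]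

theorem threeCycle_apply_of_ne (ha : x ≠ a) (hb : x ≠ b) (hc : x ≠ c) :
    threeCycle a b c x = x := by
  simp [threeCycle, swap_apply_of_ne_of_ne ha hb, swap_apply_of_ne_of_ne ha hc]

theorem threeCycle_apply (hab : a ≠ b) (hac : a ≠ c) (hbc : b ≠ c) (x : α) :
    threeCycle a b c x = if x = a then b else if x = b then c else if x = c then a else x := by
  split_ifs with ha hb hc
  · subst ha; exact threeCycle_apply_left hab.symm hbc
  · subst hb; exact threeCycle_apply_mid
  · subst hc; exact threeCycle_apply_right hac.symm hbc.symm
  · exact threeCycle_apply_of_ne ha hb hc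

theorem threeCycle_rotate (hab : a ≠ b) (hac : a ≠ c) (hbc : b ≠ c) :
    threeCycle a b c = threeCycle b c a := by
  ext x
  rw [threeCycle_apply hab hac hbc, threeCycle_apply hbc hab.symm hac.symm]
  split_ifs <;> simp_all

theorem threeCycle_inv : (threeCycle a b c)⁻¹ = threeCycle a c b := by
  simp [threeCycle, mul_inv_rev]

theorem sign_threeCycle [Fintype α] (hab : a ≠ b) (hac : a ≠ c) : sign (threeCycle a b c) = 1 := by
  simp [threeCycle, sign_swap hab, sign_swap hac]

theorem conj_threeCycle (ρ : Perm α) :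
    ρ * threeCycle a b c * ρ⁻¹ = threeCycle (ρ a) (ρ b) (ρ c) := by
  simp only [threeCycle, swap_apply_apply]
  group

theorem support_threeCycle_subset [Fintype α] : (threeCycle a b c).support ⊆ {a, b, c} := by
  intro x hx
  contrapose! hx
  simp only [Finset.mem_insert, Finset.mem_singleton, not_or] at hx
  exact notMem_support.2 (threeCycle_apply_of_ne hx.1 hx.2.1 hx.2.2)

end ThreeCycle

structure ThreeCycleMem {α : Type*} [DecidableEq α] (S : Subgroup (Perm α)) (a b c : α) : Prop where
  ne₁₂ : a ≠ b
  ne₁₃ : a ≠ c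
  ne₂₃ : b ≠ c
  mem : threeCycle a b c ∈ S

namespace ThreeCycleMem

variable {α : Type*} [DecidableEq α] {S : Subgroup (Perm α)} {a b c d : α}

theorem rotate (h : ThreeCycleMem S a b c) : ThreeCycleMem S b c a :=
  ⟨h.ne₂₃, h.ne₁₂.symm, h.ne₁₃.symm, threeCycle_rotate h.ne₁₂ h.ne₁₃ h.ne₂₃ ▸ h.mem⟩

theorem swap (h : ThreeCycleMem S a b c) : ThreeCycleMem S a c b :=
  ⟨h.ne₁₃, h.ne₁₂, h.ne₂₃.symm, threeCycle_inv (a := a) ▸ inv_mem h.mem⟩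

theorem conj (h : ThreeCycleMem S a b c) {ρ : Perm α} (hρ : ρ ∈ S) :
    ThreeCycleMem S (ρ a) (ρ b) (ρ c) :=
  ⟨ρ.injective.ne h.ne₁₂, ρ.injective.ne h.ne₁₃, ρ.injective.ne h.ne₂₃,
    conj_threeCycle ρ ▸ mul_mem (mul_mem hρ h.mem) (inv_mem hρ)⟩

/-- Conjugating by `(a d b)`, which fixes `c`, sends the triple `(a, b, c)` to `(d, a, c)`. -/
theorem exchange (h : ThreeCycleMem S a b c) (h' : ThreeCycleMem S a b d) (hcd : c ≠ d) :
    ThreeCycleMem S a c d := by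
  have := h.conj (threeCycle_inv (a := a) ▸ inv_mem h'.mem)
  rw [threeCycle_apply_left h'.ne₁₃.symm h'.ne₂₃.symm, threeCycle_apply_right h'.ne₁₂.symm h'.ne₂₃,
    threeCycle_apply_of_ne h.ne₁₃.symm hcd h.ne₂₃.symm] at this
  exact this.rotate

end ThreeCycleMem

theorem Finset.exists_eq_triple_of_card_eq_three {α : Type*} [DecidableEq α] {s : Finset α}
    (hs : s.card = 3) {a b : α} (ha : a ∈ s) (hb : b ∈ s) (hab : a ≠ b) :
    ∃ c, c ≠ a ∧ c ≠ b ∧ s = {a, b, c} := by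
  obtain ⟨c, hc⟩ := Finset.card_eq_one.1 <| by
    rw [Finset.card_sdiff_of_subset (Finset.insert_subset ha (Finset.singleton_subset_iff.2 hb)),
      hs, Finset.card_pair hab]
  have hcs : c ∈ s \ {a, b} := hc ▸ Finset.mem_singleton_self c
  simp only [Finset.mem_sdiff, Finset.mem_insert, Finset.mem_singleton, not_or] at hcs
  refine ⟨c, hcs.2.1, hcs.2.2, (Finset.eq_of_subset_of_card_le ?_ ?_).symm⟩
  · simp [Finset.insert_subset_iff, ha, hb, hcs.1]
  · rw [hs, Finset.card_eq_three.2 ⟨a, b, c, hab, Ne.symm hcs.2.1, Ne.symm hcs.2.2, rfl⟩]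

section Reachability

variable {V : Type*} {E : Set (Finset V)} {a b : V}

local notation "Reach" => Relation.ReflTransGen (hyperAdj E)

theorem hyperAdj_symm (h : hyperAdj E a b) : hyperAdj E b a :=
  ⟨h.1.symm, h.2.imp fun _ ⟨he, ha, hb⟩ => ⟨he, hb, ha⟩⟩

theorem reach_symm (h : Reach a b) : Reach b a := by
  induction h with
  | refl => exact .refl
  | tail _ hbc ih => exact .head (hyperAdj_symm hbc) ih

theorem reach_iff_reach_apply {g : Perm V} (hg : ∀ u, Reach u (g u)) (v u : V) :
    Reach v u ↔ Reach v (g u) :=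
  ⟨fun h => h.trans (hg u), fun h => h.trans (reach_symm (hg u))⟩

end Reachability

section CyclingGroup

variable {V : Type*} [DecidableEq V] {E : Set (Finset V)} {a b c d x y z w : V}

local notation "Reach" => Relation.ReflTransGen (hyperAdj E)

variable (E) in
def cyclingGroup : Subgroup (Perm V) :=
  Subgroup.closure {σ : Perm V | ∃ a b c : V, a ≠ b ∧ a ≠ c ∧ b ≠ c ∧
    ({a, b, c} : Finset V) ∈ E ∧ σ = Equiv.swap a c * Equiv.swap a b}

theorem threeCycleMem_cyclingGroup (hab : a ≠ b) (hac : a ≠ c) (hbc : b ≠ c)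
    (he : ({a, b, c} : Finset V) ∈ E) : ThreeCycleMem (cyclingGroup E) a b c :=
  ⟨hab, hac, hbc, Subgroup.subset_closure ⟨a, b, c, hab, hac, hbc, he, rfl⟩⟩

theorem exists_triple_mem_of_hyperAdj (hE : ∀ e ∈ E, e.card = 3) (h : hyperAdj E a b) :
    ∃ c, c ≠ a ∧ c ≠ b ∧ ({a, b, c} : Finset V) ∈ E := by
  obtain ⟨e, he, ha, hb⟩ := h.2
  obtain ⟨c, hca, hcb, rfl⟩ := Finset.exists_eq_triple_of_card_eq_three (hE e he) ha hb h.1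
  exact ⟨c, hca, hcb, he⟩

namespace ThreeCycleMem

theorem of_hyperAdj (hE : ∀ e ∈ E, e.card = 3) (h : ThreeCycleMem (cyclingGroup E) a b c)
    (hcd : hyperAdj E c d) (hda : d ≠ a) (hdb : d ≠ b) : ThreeCycleMem (cyclingGroup E) a b d := by
  obtain ⟨w, hwc, hwd, he⟩ := exists_triple_mem_of_hyperAdj hE hcd
  have hcd' : c ≠ d := hcd.1
  by_cases hwa : w = a
  · subst hwa
    have hρ := threeCycleMem_cyclingGroup hwd hwc hcd'.symm (by convert he using 1; grind)
    have := h.conj hρ.mem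
    rw [threeCycle_apply_left hda hcd'.symm, threeCycle_apply_of_ne h.ne₁₂.symm hdb.symm h.ne₂₃,
      threeCycle_apply_right hwc.symm hcd'] at this
    exact this.rotate.rotate.swap
  by_cases hwb : w = b
  · subst hwb
    have hρ := threeCycleMem_cyclingGroup hwd hwc hcd'.symm (by convert he using 1; grind)
    have := h.conj hρ.mem
    rw [threeCycle_apply_of_ne h.ne₁₂ hda.symm h.ne₁₃, threeCycle_apply_left hdb hcd'.symm,
      threeCycle_apply_right hwc.symm hcd'] at this
    exact this.swap
  · have hρ := threeCycleMem_cyclingGroup hcd' (Ne.symm hwc) (Ne.symm hwd) he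
    have := h.conj hρ.mem
    rwa [threeCycle_apply_of_ne h.ne₁₃ hda.symm (Ne.symm hwa),
      threeCycle_apply_of_ne h.ne₂₃ hdb.symm (Ne.symm hwb),
      threeCycle_apply_left hcd'.symm hwd.symm] at this

theorem of_hyperAdj_mid (hE : ∀ e ∈ E, e.card = 3) (h : ThreeCycleMem (cyclingGroup E) x y w)
    (hyz : hyperAdj E y z) (hzx : z ≠ x) : ThreeCycleMem (cyclingGroup E) x y z := by
  by_cases hzw : z = w
  · exact hzw ▸ h
  have h' := h.swap
  exact h'.exchange (h'.of_hyperAdj hE hyz hzx hzw) hyz.1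

theorem of_reach (hE : ∀ e ∈ E, e.card = 3) (h : ThreeCycleMem (cyclingGroup E) x y w)
    (hyz : Reach y z) (hzx : z ≠ x) (hzy : z ≠ y) : ThreeCycleMem (cyclingGroup E) x y z := by
  induction hyz with
  | refl => exact absurd rfl hzy
  | @tail p q _ hpq ih =>
    by_cases hpx : p = x
    · subst hpx
      exact (h.rotate.swap.of_hyperAdj_mid hE hpq hzy).rotate.swap
    by_cases hpy : p = y
    · subst hpy
      exact h.of_hyperAdj_mid hE hpq hzx
    exact (ih hpx hpy).of_hyperAdj hE hpq hzx hzy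

end ThreeCycleMem

theorem exists_threeCycleMem_of_reach (hE : ∀ e ∈ E, e.card = 3) (hxy : x ≠ y) (h : Reach x y) :
    ∃ w, ThreeCycleMem (cyclingGroup E) x y w := by
  induction h with
  | refl => exact absurd rfl hxy
  | @tail b y _ hby ih =>
    by_cases hxb : x = b
    · subst hxb
      obtain ⟨w, hwx, hwy, he⟩ := exists_triple_mem_of_hyperAdj hE hby
      exact ⟨w, threeCycleMem_cyclingGroup hxy hwx.symm hwy.symm he⟩
    obtain ⟨w, hw⟩ := ih hxb
    by_cases hyw : y = w
    · exact ⟨b, hyw ▸ hw.swap⟩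
    exact ⟨w, (hw.swap.of_hyperAdj hE hby (Ne.symm hxy) hyw).swap⟩

theorem threeCycleMem_of_reach (hE : ∀ e ∈ E, e.card = 3) (hxy : x ≠ y) (hxz : x ≠ z)
    (hyz : y ≠ z) (hRxy : Reach x y) (hRxz : Reach x z) : ThreeCycleMem (cyclingGroup E) x y z :=
  have ⟨_, hw⟩ := exists_threeCycleMem_of_reach hE hxy hRxy
  hw.of_reach hE ((reach_symm hRxy).trans hRxz) hxz.symm hyz.symm

end CyclingGroup

theorem Equiv.Perm.exists_mem_support_ne_of_sign_eq_one {α : Type*} [DecidableEq α] [Fintype α]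
    {f : Perm α} (hf : sign f = 1) {a : α} (ha : a ∈ f.support) :
    ∃ c ∈ f.support, c ≠ a ∧ c ≠ f a := by
  by_contra! h
  have hsupp : f.support ⊆ {a, f a} := fun c hc => by
    by_cases hca : c = a
    · simp [hca]
    · simp [h c hc hca]
  have hf1 : f ≠ 1 := fun h1 => by simp [h1] at ha
  have hswap : f.IsSwap := card_support_eq_two.1 <| le_antisymm
    ((Finset.card_le_card hsupp).trans Finset.card_le_two) (two_le_card_support_of_ne_one hf1)
  rw [hswap.sign_eq] at hf
  exact absurd hf (by decide)

theorem Equiv.Perm.card_support_inv_mul_lt {α : Type*} [DecidableEq α] [Fintype α]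
    {g τ : Perm α} (hτ : τ.support ⊆ g.support) {a : α} (ha : a ∈ g.support) (hτa : τ a = g a) :
    (τ⁻¹ * g).support.card < g.support.card := by
  refine Finset.card_lt_card <| (Finset.ssubset_iff_of_subset ?_).2 ⟨a, ha, ?_⟩
  · refine (support_mul_le _ _).trans ?_
    rw [support_inv]
    exact sup_le hτ le_rfl
  · rw [notMem_support, mul_apply, ← hτa, inv_eq_iff_eq]

section ComponentAlternatingGroup

variable {V : Type*} [DecidableEq V] [Fintype V] {E : Set (Finset V)} {a : V} {g σ : Perm V}

local notation "Reach" => Relation.ReflTransGen (hyperAdj E)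

variable (E) in
def componentAlternatingGroup : Subgroup (Perm V) where
  carrier := {g | (∀ v, Reach v (g v)) ∧
    ∀ v, ∀ h : ∀ u, Reach v u ↔ Reach v (g u),
      sign (g.subtypePerm (p := fun u => Reach v u) (fun u => (h u).symm)) = 1}
  one_mem' := ⟨fun _ => .refl, fun _ _ => by rw [subtypePerm_one, map_one]⟩
  mul_mem' {g h} hg hh := ⟨fun v => (hh.1 v).trans (hg.1 (h v)), fun v _ => by
    rw [← subtypePerm_mul _ _ (fun u => (reach_iff_reach_apply hg.1 v u).symm)
      (fun u => (reach_iff_reach_apply hh.1 v u).symm), map_mul,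
      hg.2 v (reach_iff_reach_apply hg.1 v), hh.2 v (reach_iff_reach_apply hh.1 v), mul_one]⟩
  inv_mem' {g} hg := by
    have hreach : ∀ v, Reach v (g⁻¹ v) := fun v => by
      simpa using reach_symm (hg.1 (g⁻¹ v))
    refine ⟨hreach, fun v _ => ?_⟩
    rw [← inv_subtypePerm _ (fun u => (reach_iff_reach_apply hg.1 v u).symm), map_inv,
      hg.2 v (reach_iff_reach_apply hg.1 v), inv_one]

theorem mem_componentAlternatingGroup_of_sign_eq_one (a : V) (hσ : sign σ = 1)
    (hmoved : ∀ u, σ u ≠ u → Reach a u) : σ ∈ componentAlternatingGroup E := by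
  have hreach : ∀ v, Reach v (σ v) := fun v => by
    by_cases hv : σ v = v
    · rw [hv]
    · exact (reach_symm (hmoved v hv)).trans (hmoved (σ v) fun h => hv (σ.injective h))
  refine ⟨hreach, fun v h => ?_⟩
  by_cases hva : Reach v a
  · rw [sign_subtypePerm _ _ fun u hu => hva.trans (hmoved u hu), hσ]
  · have : σ.subtypePerm (p := fun u => Reach v u) (fun u => (h u).symm) = 1 := by
      ext ⟨u, hu⟩
      by_contra hne
      exact hva (hu.trans (reach_symm (hmoved u hne)))
    rw [this, map_one]

theorem cyclingGroup_le_componentAlternatingGroup :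
    cyclingGroup E ≤ componentAlternatingGroup E := by
  refine Subgroup.closure_le _ |>.2 fun σ ⟨a, b, c, hab, hac, hbc, he, hσ⟩ => ?_
  have hadj {x y} (hx : x ∈ ({a, b, c} : Finset V)) (hy : y ∈ ({a, b, c} : Finset V))
      (hxy : x ≠ y) : hyperAdj E x y := ⟨hxy, _, he, hx, hy⟩
  refine hσ ▸ mem_componentAlternatingGroup_of_sign_eq_one a (sign_threeCycle hab hac)
    fun u hu => ?_
  have hu' := support_threeCycle_subset (mem_support.2 hu)
  simp only [Finset.mem_insert, Finset.mem_singleton] at hu'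
  rcases hu' with rfl | rfl | rfl
  · exact .refl
  · exact .single (hadj (by simp) (by simp) hab)
  · exact .single (hadj (by simp) (by simp) hac)

theorem exists_reach_mem_support_of_mem_componentAlternatingGroup
    (hg : g ∈ componentAlternatingGroup E) (ha : a ∈ g.support) :
    ∃ c ∈ g.support, Reach a c ∧ c ≠ a ∧ c ≠ g a := by
  obtain ⟨⟨c, hc⟩, hcg, hca, hcga⟩ := exists_mem_support_ne_of_sign_eq_one
    (hg.2 a (reach_iff_reach_apply hg.1 a)) (a := ⟨a, .refl⟩)
    (mem_support.2 fun h => mem_support.1 ha (congrArg Subtype.val h))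
  refine ⟨c, mem_support.2 fun h => mem_support.1 hcg (Subtype.ext h), hc,
    fun h => hca (Subtype.ext h), fun h => hcga (Subtype.ext h)⟩

theorem mem_cyclingGroup_of_mem_componentAlternatingGroup (hE : ∀ e ∈ E, e.card = 3)
    (hg : g ∈ componentAlternatingGroup E) : g ∈ cyclingGroup E := by
  induction hn : g.support.card using Nat.strong_induction_on generalizing g with
  | _ n ih =>
  obtain h1 | ⟨a, ha⟩ := g.support.eq_empty_or_nonempty
  · exact support_eq_empty_iff.1 h1 ▸ one_mem _
  obtain ⟨c, hcg, hac, hca, hcga⟩ := exists_reach_mem_support_of_mem_componentAlternatingGroup hg ha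
  have hga : g a ≠ a := mem_support.1 ha
  have hτ : threeCycle a (g a) c ∈ cyclingGroup E :=
    (threeCycleMem_of_reach hE hga.symm hca.symm hcga.symm (hg.1 a) hac).mem
  have hτg : (threeCycle a (g a) c).support ⊆ g.support := by
    refine support_threeCycle_subset.trans fun x hx => ?_
    simp only [Finset.mem_insert, Finset.mem_singleton] at hx
    rcases hx with rfl | rfl | rfl
    exacts [ha, apply_mem_support.2 ha, hcg]
  have hlt := hn ▸ card_support_inv_mul_lt hτg ha (threeCycle_apply_left hga hcga.symm)
  have := ih _ hlt (mul_mem (inv_mem (cyclingGroup_le_componentAlternatingGroup hτ)) hg) rfl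
  simpa using mul_mem hτ this

theorem cyclingGroup_eq_componentAlternatingGroup (hE : ∀ e ∈ E, e.card = 3) :
    cyclingGroup E = componentAlternatingGroup E :=
  le_antisymm cyclingGroup_le_componentAlternatingGroup
    fun _ => mem_cyclingGroup_of_mem_componentAlternatingGroup hE

end ComponentAlternatingGroup

/-- **Cycling group of a 3-hypergraph.**
Let `V` be a finite type and `E` a collection of 3-element subsets of `V`.  The subgroup
of `Perm V` generated by the 3-cycles `(a b c)` (i.e. `a ↦ b ↦ c ↦ a`) over hyperedges
`{a,b,c} ∈ E` consists exactly of those permutations `g` such that (i) `g v` is reachable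
from `v` for every `v`, and (ii) the restriction of `g` to each connected component
`{u | v ⇝ u}` is an even permutation of that component; i.e. the cycling group is the
direct product of the alternating groups of the connected components. -/
theorem cyclingGroup_mem_iff {V : Type*} [Fintype V] [DecidableEq V]
    (E : Set (Finset V)) (hE : ∀ e ∈ E, e.card = 3) (g : Equiv.Perm V) :
    g ∈ Subgroup.closure
        {σ : Equiv.Perm V | ∃ a b c : V, a ≠ b ∧ a ≠ c ∧ b ≠ c ∧
          ({a, b, c} : Finset V) ∈ E ∧ σ = Equiv.swap a c * Equiv.swap a b} ↔
      ((∀ v : V, Relation.ReflTransGen (hyperAdj E) v (g v)) ∧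
        ∀ v : V,
          ∀ h : ∀ u : V, Relation.ReflTransGen (hyperAdj E) v u ↔
              Relation.ReflTransGen (hyperAdj E) v (g u),
          Equiv.Perm.sign (g.subtypePerm (p := fun u => Relation.ReflTransGen (hyperAdj E) v u)
            (fun u => (h u).symm)) = 1) :=
  SetLike.ext_iff.1 (cyclingGroup_eq_componentAlternatingGroup hE) g
end

section
/- Let A be a finite type and n ≥ 1. For a coordinate i : Fin n, distinct symbols a, b ∈ A, and a function w assigning a symbol to every coordinate j ≠ i, the controlled symbol swap determined by (i, a, b, w) is the permutation of words of length n that exchanges the two words x with x(j) = w(j) for all j ≠ i and x(i) ∈ {a, b} (swapping the values a and b at coordinate i) and fixes all other words. Then the subgroup of Perm(Fin n → A) generated by all controlled symbol swaps is the full symmetric group of (Fin n → A). -/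
/-- **Controlled symbol swaps generate the full symmetric group.**
Let `A` be a finite type and `n ≥ 1`.  For a coordinate `i : Fin n`, distinct symbols
`a ≠ b` in `A` and an assignment `w` of a symbol to every coordinate `j ≠ i`, the
controlled symbol swap determined by `(i, a, b, w)` is the transposition exchanging
the two words that equal `w` outside `i` and take the value `a`, resp. `b`, at `i`
(and fixing all other words).  The subgroup of `Perm (Fin n → A)` generated by all
controlled symbol swaps is the full symmetric group of `Fin n → A`. -/
theorem controlledSymbolSwaps_generate_top {A : Type*} [Fintype A] [DecidableEq A]
    (n : ℕ) (hn : 1 ≤ n) :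
    Subgroup.closure
        {σ : Equiv.Perm (Fin n → A) |
          ∃ (i : Fin n) (a b : A) (w : ∀ j : Fin n, j ≠ i → A), a ≠ b ∧
            σ = Equiv.swap
              (fun j => if h : j = i then a else w j h)
              (fun j => if h : j = i then b else w j h)} = ⊤ := by
  set S : Set (Equiv.Perm (Fin n → A)) :=
    {σ : Equiv.Perm (Fin n → A) |
          ∃ (i : Fin n) (a b : A) (w : ∀ j : Fin n, j ≠ i → A), a ≠ b ∧
            σ = Equiv.swap
              (fun j => if h : j = i then a else w j h)
              (fun j => if h : j = i then b else w j h)} with hS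
  -- single-coordinate swaps are in S
  have hone : ∀ (x y : Fin n → A) (i : Fin n), x i ≠ y i → (∀ j, j ≠ i → x j = y j) →
      Equiv.swap x y ∈ S := by
    intro x y i hi hoff
    refine ⟨i, x i, y i, fun j _ => x j, hi, ?_⟩
    congr 1
    · funext j
      by_cases h : j = i <;> simp [h]
    · funext j
      by_cases h : j = i <;> simp [h, hoff]
  -- all swaps are in the closure, by induction on Hamming distance
  have key : ∀ (d : ℕ) (x y : Fin n → A),
      (Finset.univ.filter fun j => x j ≠ y j).card ≤ d →
      Equiv.swap x y ∈ Subgroup.closure S := by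
    intro d
    induction d with
    | zero =>
      intro x y h
      have : x = y := by
        funext j
        by_contra hj
        exact absurd (Finset.card_eq_zero.mp (Nat.le_zero.mp h))
          (Finset.ne_empty_of_mem (Finset.mem_filter.mpr ⟨Finset.mem_univ j, hj⟩))
      rw [this, Equiv.swap_self]
      exact one_mem _
    | succ d ih =>
      intro x y h
      by_cases hxy : x = y
      · rw [hxy, Equiv.swap_self]; exact one_mem _
      obtain ⟨i, hi⟩ : ∃ i, x i ≠ y i := by
        by_contra hc
        push_neg at hc
        exact hxy (funext hc)
      set z : Fin n → A := Function.update x i (y i) with hz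
      have hxz : Equiv.swap x z ∈ Subgroup.closure S := by
        refine Subgroup.subset_closure (hone x z i ?_ ?_)
        · simpa [hz] using hi
        · intro j hj; simp [hz, Function.update_of_ne hj]
      have hzy : Equiv.swap z y ∈ Subgroup.closure S := by
        apply ih
        have hsub : (Finset.univ.filter fun j => z j ≠ y j) ⊆
            (Finset.univ.filter fun j => x j ≠ y j) \ {i} := by
          intro j hj
          simp only [Finset.mem_filter, Finset.mem_univ, true_and] at hj
          rcases eq_or_ne j i with rfl | hji
          · exact absurd (by simp [hz]) hj
          · simp only [Finset.mem_sdiff, Finset.mem_filter, Finset.mem_univ, true_and,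
              Finset.mem_singleton]
            exact ⟨by simpa [hz, Function.update_of_ne hji] using hj, hji⟩
        calc (Finset.univ.filter fun j => z j ≠ y j).card
            ≤ ((Finset.univ.filter fun j => x j ≠ y j) \ {i}).card :=
              Finset.card_le_card hsub
          _ ≤ (Finset.univ.filter fun j => x j ≠ y j).card - 1 := by
              rw [Finset.sdiff_singleton_eq_erase]
              exact (Finset.card_erase_of_mem (by simp [hi])).le
          _ ≤ d := by omega
      exact SubmonoidClass.swap_mem_trans _ hxz hzy
  rw [eq_top_iff, ← Equiv.Perm.closure_isSwap, Subgroup.closure_le]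
  rintro σ ⟨x, y, -, rfl⟩
  exact key _ x y le_rfl
end

section
/- Let A be a finite type and n ≥ 2. For distinct coordinates i, j : Fin n, distinct symbols a, b ∈ A, and a function w assigning a symbol to every coordinate outside {i, j}, the controlled letter transposition determined by (i, j, a, b, w) is the permutation of words of length n that exchanges the word x with x(i) = a, x(j) = b, and x(k) = w(k) for all k ∉ {i,j} with the word y with y(i) = b, y(j) = a, and y(k) = w(k) for all k ∉ {i,j}, and fixes all other words. Then the subgroup of Perm(Fin n → A) generated by all controlled letter transpositions equals the group of all conservative permutations of (Fin n → A). -/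
/-- The weight of a word `x : Fin n → A` is the multiset of its entries. -/
def wordWeight {A : Type*} {n : ℕ} (x : Fin n → A) : Multiset A :=
  Multiset.map x Finset.univ.val

/-!
Both groups are the permutations preserving the fibres of `wordWeight`. A permutation preserving
the fibres of a map on a finite set is a product of transpositions `swap x y` with `x`, `y` in
one fibre (peel off `swap x (g x)` and induct on the support). Two words `x`, `y` of equal weight
satisfy `y = x ∘ σ` for a permutation `σ` of positions; writing `σ` as a product of
transpositions of positions gives a path from `x` to `y` each of whose steps fixes the word or is
a controlled letter transposition, and conjugating along the path shows that `swap x y` lies in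
the subgroup they generate.
-/

open Equiv Subgroup Relation

namespace Equiv.Perm

variable {α β : Type*}

def fiberPreserving (f : α → β) : Subgroup (Perm α) where
  carrier := {g | ∀ x, f (g x) = f x}
  one_mem' _ := rfl
  mul_mem' hg hh x := (hg _).trans (hh x)
  inv_mem' {g} hg x := by simpa using (hg (g⁻¹ x)).symm

theorem swap_mem_fiberPreserving [DecidableEq α] {f : α → β} {x y : α} (h : f x = f y) :
    swap x y ∈ fiberPreserving f := by
  intro z
  rcases eq_or_ne z x with rfl | hx
  · simpa using h.symm
  rcases eq_or_ne z y with rfl | hy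
  · simpa using h
  · rw [swap_apply_of_ne_of_ne hx hy]

theorem fiberPreserving_le_closure [Fintype α] [DecidableEq α] {S : Set (Perm α)} (f : α → β)
    (hS : ∀ x y, f x = f y → swap x y ∈ closure S) : fiberPreserving f ≤ closure S := by
  intro g hg
  induction hcard : g.support.card using Nat.strong_induction_on generalizing g with
  | _ m ih =>
    by_cases hg1 : g = 1
    · exact hg1 ▸ one_mem _
    obtain ⟨x, hx⟩ : ∃ x, g x ≠ x := not_forall.mp fun h => hg1 (Perm.ext h)
    have hτ := hS x (g x) (hg x).symm
    have hrest : swap x (g x) * g ∈ closure S :=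
      ih _ (hcard ▸ card_support_swap_mul hx)
        (mul_mem (swap_mem_fiberPreserving (hg x).symm) hg) rfl
    simpa [← mul_assoc] using mul_mem hτ hrest

theorem swap_mem_closure_of_reflTransGen [DecidableEq α] {S : Set (Perm α)} {x y : α}
    (h : ReflTransGen (fun u v => swap u v ∈ S) x y) : swap x y ∈ closure S := by
  induction h with
  | refl => rw [swap_self]; exact one_mem _
  | @tail y z _ hyz ih =>
    rcases eq_or_ne x y with rfl | hxy
    · exact subset_closure hyz
    rcases eq_or_ne x z with rfl | hxz
    · rw [swap_self]; exact one_mem _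
    rw [swap_comm, ← swap_mul_swap_mul_swap hxy hxz]
    exact mul_mem (mul_mem (subset_closure hyz) ih) (subset_closure hyz)

end Equiv.Perm

theorem Equiv.comp_swap_eq_self_of_eq {α β : Type*} [DecidableEq α] {f : α → β} {i j : α}
    (h : f i = f j) : f ∘ swap i j = f := by
  ext k
  simp only [Function.comp_apply, swap_apply_def]
  split_ifs <;> simp_all

open Equiv.Perm

section Words

variable {A : Type*} {n : ℕ}

theorem wordWeight_comp_perm (x : Fin n → A) (σ : Perm (Fin n)) :
    wordWeight (x ∘ σ) = wordWeight x := by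
  rw [wordWeight, ← Multiset.map_map, Multiset.map_univ_val_equiv, wordWeight]

variable [DecidableEq A]

theorem card_fiber_eq_count_wordWeight (x : Fin n → A) (a : A) :
    Fintype.card {k // x k = a} = (wordWeight x).count a := by
  simp only [wordWeight, Multiset.count_map, Fintype.card_subtype, eq_comm]
  rfl

theorem exists_perm_comp_eq_of_wordWeight_eq {x y : Fin n → A}
    (h : wordWeight x = wordWeight y) : ∃ σ : Perm (Fin n), x ∘ σ = y := by
  have fibers (a : A) : {k // y k = a} ≃ {k // x k = a} :=
    Fintype.equivOfCardEq <| by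
      rw [card_fiber_eq_count_wordWeight, card_fiber_eq_count_wordWeight, h]
  exact ⟨ofFiberEquiv fibers, funext (ofFiberEquiv_map fibers)⟩

variable (A n) in
def controlledLetterTranspositions : Set (Perm (Fin n → A)) :=
  {σ | ∃ (i j : Fin n) (a b : A) (w : ∀ k : Fin n, k ≠ i → k ≠ j → A),
      i ≠ j ∧ a ≠ b ∧
      σ = swap (fun k => if h1 : k = i then a else if h2 : k = j then b else w k h1 h2)
        (fun k => if h1 : k = i then b else if h2 : k = j then a else w k h1 h2)}

theorem mem_controlledLetterTranspositions_iff {σ : Perm (Fin n → A)} :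
    σ ∈ controlledLetterTranspositions A n ↔
      ∃ (x : Fin n → A) (i j : Fin n), i ≠ j ∧ x i ≠ x j ∧ σ = swap x (x ∘ swap i j) := by
  constructor
  · rintro ⟨i, j, a, b, w, hij, hab, rfl⟩
    refine ⟨_, i, j, hij, by simpa [hij.symm] using hab, congrArg _ (funext fun k => ?_)⟩
    simp only [Function.comp_apply, swap_apply_def]
    split_ifs <;> first | contradiction | simp_all
  · rintro ⟨x, i, j, hij, hx, rfl⟩
    refine ⟨i, j, x i, x j, fun k _ _ => x k, hij, hx, ?_⟩
    congr 1 <;> funext k <;> simp only [Function.comp_apply, swap_apply_def] <;> split_ifs <;>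
      simp_all

theorem reflTransGen_of_wordWeight_eq {x y : Fin n → A} (h : wordWeight x = wordWeight y) :
    ReflTransGen (fun u v => swap u v ∈ controlledLetterTranspositions A n) x y := by
  obtain ⟨σ, rfl⟩ := exists_perm_comp_eq_of_wordWeight_eq h
  clear h
  induction σ using swap_induction_on' with
  | one => exact ReflTransGen.refl
  | mul_swap σ i j hij ih =>
    rw [coe_mul, ← Function.comp_assoc]
    by_cases hσ : (x ∘ σ) i = (x ∘ σ) j
    · rwa [comp_swap_eq_self_of_eq hσ]
    · exact ih.tail (mem_controlledLetterTranspositions_iff.2 ⟨_, i, j, hij, hσ, rfl⟩)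

theorem controlledLetterTranspositions_subset_fiberPreserving :
    controlledLetterTranspositions A n ⊆ fiberPreserving (wordWeight (A := A) (n := n)) := by
  intro σ hσ
  obtain ⟨x, i, j, -, -, rfl⟩ := mem_controlledLetterTranspositions_iff.1 hσ
  exact swap_mem_fiberPreserving (wordWeight_comp_perm x _).symm

theorem closure_controlledLetterTranspositions [Fintype A] :
    closure (controlledLetterTranspositions A n) = fiberPreserving wordWeight :=
  le_antisymm (closure_le _ |>.2 controlledLetterTranspositions_subset_fiberPreserving) <|
    fiberPreserving_le_closure wordWeight fun _ _ h =>
      swap_mem_closure_of_reflTransGen (reflTransGen_of_wordWeight_eq h)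

end Words

theorem controlledLetterTranspositions_generate_conservative_general
    {A : Type*} [Fintype A] [DecidableEq A] (n : ℕ)
    (g : Equiv.Perm (Fin n → A)) :
    g ∈ Subgroup.closure
        {σ : Equiv.Perm (Fin n → A) |
          ∃ (i j : Fin n) (a b : A) (w : ∀ k : Fin n, k ≠ i → k ≠ j → A),
            i ≠ j ∧ a ≠ b ∧
            σ = Equiv.swap
              (fun k => if h1 : k = i then a else if h2 : k = j then b else w k h1 h2)
              (fun k => if h1 : k = i then b else if h2 : k = j then a else w k h1 h2)} ↔
      ∀ x : Fin n → A, wordWeight (g x) = wordWeight x := by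
  change g ∈ closure (controlledLetterTranspositions A n) ↔ g ∈ fiberPreserving wordWeight
  rw [closure_controlledLetterTranspositions]

/-- **Controlled letter transpositions generate the conservative group.**
Let `A` be a finite type and `n ≥ 2`.  For distinct coordinates `i ≠ j` in `Fin n`,
distinct symbols `a ≠ b` in `A` and an assignment `w` of a symbol to every coordinate
outside `{i, j}`, the controlled letter transposition determined by `(i, j, a, b, w)`
exchanges the word equal to `w` outside `{i,j}` with values `a` at `i` and `b` at `j`
with the word equal to `w` outside `{i,j}` with values `b` at `i` and `a` at `j`,
fixing all other words.  A permutation of `Fin n → A` lies in the subgroup generated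
by all controlled letter transpositions if and only if it is conservative, i.e. it
preserves the multiset of entries of every word. -/
theorem controlledLetterTranspositions_generate_conservative
    {A : Type*} [Fintype A] [DecidableEq A] (n : ℕ) (hn : 2 ≤ n)
    (g : Equiv.Perm (Fin n → A)) :
    g ∈ Subgroup.closure
        {σ : Equiv.Perm (Fin n → A) |
          ∃ (i j : Fin n) (a b : A) (w : ∀ k : Fin n, k ≠ i → k ≠ j → A),
            i ≠ j ∧ a ≠ b ∧
            σ = Equiv.swap
              (fun k => if h1 : k = i then a else if h2 : k = j then b else w k h1 h2)
              (fun k => if h1 : k = i then b else if h2 : k = j then a else w k h1 h2)} ↔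
      ∀ x : Fin n → A, wordWeight (g x) = wordWeight x :=
  controlledLetterTranspositions_generate_conservative_general n g
end

section
/- Let A be a finite type, M a commutative monoid, and φ a monoid homomorphism from the free monoid on A (lists over A under concatenation) to M. Then there exists m ∈ ℕ such that for all n ≥ m and all lists s, t over A of length n with φ(s) = φ(t), there is a finite chain s = w₀, w₁, …, w_k = t of lists of length n in which each consecutive pair has the form wᵢ = u ++ x ++ v and wᵢ₊₁ = u ++ y ++ v for some lists u, v and some lists x, y of length m with φ(x) = φ(y). -/
/-!
On multisets, "same length and same weight" is an additive congruence of the free commutative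
monoid on `A`, and by Rédei's theorem it is generated by finitely many pairs: the binomials
`X^a - X^b` of related pairs span an ideal of the Noetherian ring `ℚ[Multiset A]`, finitely many
of them already span it, and the corresponding pairs generate the congruence because their
binomials vanish in the monoid algebra of the quotient by the congruence they generate.

Take `m ≥ 2` bounding the sizes of the generating pairs. In a list of length at least `m`, an
adjacent transposition, and the replacement of a factor realising a generating pair, are single
rewriting steps once the factor is padded to length `m` by neighbouring letters. So every
generating move of the congruence, inside any context, is a chain of rewriting steps.
-/

open Relation AddMonoidAlgebra

namespace AddCon

variable {N : Type*} [AddCommMonoid N]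

theorem exists_finite_addConGen_eq (k : Type*) [CommRing k] [Nontrivial k]
    [IsNoetherianRing k[N]] (r : AddCon N) :
    ∃ G : Set (N × N), G.Finite ∧ addConGen (fun a b => (a, b) ∈ G) = r := by
  let binomial (p : N × N) : k[N] := single p.1 1 - single p.2 1
  obtain ⟨G, hGr, hGfin, hspan⟩ : ∃ G ⊆ {p | r p.1 p.2}, G.Finite ∧
      Ideal.span (binomial '' {p | r p.1 p.2}) = Ideal.span (binomial '' G) := by
    refine Set.exists_subset_image_finite_and
      (p := fun F => Ideal.span (binomial '' {p | r p.1 p.2}) = Ideal.span F) |>.1 ?_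
    obtain ⟨F, hF, hspan⟩ := (Submodule.fg_span_iff_fg_span_finset_subset _).1
      (IsNoetherian.noetherian (Ideal.span (binomial '' {p | r p.1 p.2})))
    exact ⟨F, hF, F.finite_toSet, hspan⟩
  refine ⟨G, hGfin, le_antisymm (addConGen_le.2 fun a b h => hGr h) fun a b hab => ?_⟩
  let c := addConGen fun a b => (a, b) ∈ G
  let Θ : k[N] →+* k[c.Quotient] := mapDomainRingHom k c.mk'
  have hΘ (p : N × N) : Θ (binomial p) = 0 ↔ c p.1 p.2 := by
    rw [map_sub, sub_eq_zero]
    simp [Θ, single_left_inj (one_ne_zero' k), AddCon.eq]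
  have hker : Ideal.span (binomial '' G) ≤ RingHom.ker Θ := by
    rw [Ideal.span_le]
    rintro _ ⟨p, hp, rfl⟩
    exact (hΘ p).2 (AddConGen.Rel.of _ _ hp)
  exact (hΘ (a, b)).1 (hker (hspan ▸ Ideal.subset_span ⟨(a, b), hab, rfl⟩))

end AddCon

instance Multiset.isNoetherianRing_addMonoidAlgebra {A k : Type*} [Finite A] [CommRing k]
    [IsNoetherianRing k] : IsNoetherianRing k[Multiset A] := by
  classical exact
  isNoetherianRing_of_ringEquiv (MvPolynomial A k) (mapDomainRingEquiv k Multiset.toFinsupp.symm)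

namespace FreeMonoid

variable {A M : Type*} [CommMonoid M] (φ : FreeMonoid A →* M)

def weightClassCon : AddCon (Multiset A) :=
  AddCon.ker (Multiset.cardHom.prod
    (Multiset.sumAddMonoidHom.comp (Multiset.mapAddMonoidHom fun a => Additive.ofMul (φ (of a)))))

theorem weightClassCon_coe_iff (s t : List A) :
    weightClassCon φ s t ↔ s.length = t.length ∧ φ (ofList s) = φ (ofList t) := by
  have hφ (l : List A) :
      Additive.ofMul (φ (ofList l)) = (l.map fun a => Additive.ofMul (φ (of a))).sum := by
    induction l with
    | nil => simp
    | cons a l ih => simp [ofList_cons, ih]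
  simp [weightClassCon, AddCon.ker_rel, ← hφ]

def FactorRewrite (m : ℕ) (p q : List A) : Prop :=
  ∃ u v x y : List A, x.length = m ∧ y.length = m ∧
    φ (ofList x) = φ (ofList y) ∧ p = u ++ x ++ v ∧ q = u ++ y ++ v

variable {φ} {m : ℕ}

theorem card_eq_of_weightClassCon {a b : Multiset A} (h : weightClassCon φ a b) :
    Multiset.card a = Multiset.card b :=
  congrArg Prod.fst h

theorem FactorRewrite.symm {p q : List A} (h : FactorRewrite φ m p q) : FactorRewrite φ m q p :=
  let ⟨u, v, x, y, hx, hy, hxy, hp, hq⟩ := h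
  ⟨u, v, y, x, hy, hx, hxy.symm, hq, hp⟩

instance : Std.Symm (FactorRewrite φ m) := ⟨fun _ _ => FactorRewrite.symm⟩

theorem factorRewrite_append_append {u x y v : List A} (hxy : x.length = y.length)
    (hx : x.length ≤ m) (hm : m ≤ (u ++ x ++ v).length) (hφ : φ (ofList x) = φ (ofList y)) :
    FactorRewrite φ m (u ++ x ++ v) (u ++ y ++ v) := by
  -- pad `x` and `y` to length `m` with letters of `v` first, then of `u`
  simp only [List.length_append] at hm
  obtain ⟨v₁, v₂, rfl, hv₁⟩ : ∃ v₁ v₂, v = v₁ ++ v₂ ∧ v₁.length = min v.length (m - x.length) :=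
    ⟨_, _, (List.take_append_drop _ v).symm, List.length_take_of_le (min_le_left _ _)⟩
  obtain ⟨u₁, u₂, rfl, hu₂⟩ : ∃ u₁ u₂, u = u₁ ++ u₂ ∧ u₂.length = m - x.length - v₁.length :=
    ⟨_, _, (List.take_append_drop (u.length - (m - x.length - v₁.length)) u).symm,
      by simp only [List.length_drop, List.length_append] at hm hv₁ ⊢; omega⟩
  refine ⟨u₁, v₂, u₂ ++ x ++ v₁, u₂ ++ y ++ v₁, ?_, ?_, ?_, by simp, by simp⟩
  · simp only [List.length_append] at hm hv₁ ⊢; omega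
  · simp only [List.length_append] at hm hv₁ ⊢; omega
  · simp only [ofList_append, map_mul, hφ]

theorem reflTransGen_factorRewrite_append_of_perm (hm : 2 ≤ m) {s t : List A} (h : s.Perm t)
    (u : List A) (hlen : m ≤ u.length + s.length) :
    ReflTransGen (FactorRewrite φ m) (u ++ s) (u ++ t) := by
  induction h generalizing u with
  | nil => exact .refl
  | @cons a l₁ l₂ _ ih =>
    simpa using ih (u ++ [a]) (by simp only [List.length_append, List.length_cons] at hlen ⊢; omega)
  | swap a b l =>
    refine .single ?_
    simpa using factorRewrite_append_append (u := u) (x := [b, a]) (y := [a, b]) (v := l) rfl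
      (by simpa using hm) (by simp only [List.length_append, List.length_cons] at hlen ⊢; omega)
      (by simp only [ofList_cons, ofList_nil, map_mul, mul_one]; exact mul_comm _ _)
  | trans h₁₂ _ ih₁₂ ih₂₃ =>
    exact (ih₁₂ u hlen).trans (ih₂₃ u (h₁₂.length_eq ▸ hlen))

theorem reflTransGen_factorRewrite_of_perm (hm : 2 ≤ m) {s t : List A} (h : s.Perm t)
    (hlen : m ≤ s.length) : ReflTransGen (FactorRewrite φ m) s t := by
  simpa using reflTransGen_factorRewrite_append_of_perm hm h [] (by simpa using hlen)

theorem reflTransGen_factorRewrite_of_weightClassCon (hm : 2 ≤ m) {x y e : Multiset A}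
    (hx : Multiset.card x ≤ m) (hxy : weightClassCon φ x y) {s t : List A}
    (hs : (s : Multiset A) = x + e) (ht : (t : Multiset A) = y + e) (hlen : m ≤ s.length) :
    ReflTransGen (FactorRewrite φ m) s t := by
  obtain ⟨hcard, hφ⟩ := (weightClassCon_coe_iff φ x.toList y.toList).1 (by simpa using hxy)
  have hs' : s.Perm (x.toList ++ e.toList) := Multiset.coe_eq_coe.1 <| by
    rw [← Multiset.coe_add, Multiset.coe_toList, Multiset.coe_toList, hs]
  have ht' : (y.toList ++ e.toList).Perm t := Multiset.coe_eq_coe.1 <| by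
    rw [← Multiset.coe_add, Multiset.coe_toList, Multiset.coe_toList, ht]
  have hstep : FactorRewrite φ m (x.toList ++ e.toList) (y.toList ++ e.toList) := by
    simpa using factorRewrite_append_append (u := []) hcard (by simpa using hx)
      (by simpa [← hs'.length_eq] using hlen) hφ
  refine (reflTransGen_factorRewrite_of_perm hm hs' hlen).trans
    (.head hstep (reflTransGen_factorRewrite_of_perm hm ht' ?_))
  rwa [hs'.length_eq, List.length_append, hcard, ← List.length_append] at hlen

-- Quantifying over all contexts `e` is what makes the claim stable under addition.
theorem reflTransGen_factorRewrite_of_addConGen (hm : 2 ≤ m) {G : Set (Multiset A × Multiset A)}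
    (hG : ∀ p ∈ G, Multiset.card p.1 ≤ m ∧ weightClassCon φ p.1 p.2) {a b : Multiset A}
    (hab : addConGen (fun a b => (a, b) ∈ G) a b) :
    Multiset.card a = Multiset.card b ∧ ∀ e (s t : List A), (s : Multiset A) = a + e →
      (t : Multiset A) = b + e → m ≤ s.length → ReflTransGen (FactorRewrite φ m) s t := by
  have length_eq {l : List A} {c : Multiset A} (h : (l : Multiset A) = c) :
      l.length = Multiset.card c := by
    rw [← h, Multiset.coe_card]
  induction hab with
  | of x y hxy =>
    exact ⟨card_eq_of_weightClassCon (hG _ hxy).2, fun e s t hs ht hlen =>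
      reflTransGen_factorRewrite_of_weightClassCon hm (hG _ hxy).1 (hG _ hxy).2 hs ht hlen⟩
  | refl a =>
    exact ⟨rfl, fun e s t hs ht hlen =>
      reflTransGen_factorRewrite_of_perm hm (Multiset.coe_eq_coe.1 (hs.trans ht.symm)) hlen⟩
  | symm _ ih =>
    refine ⟨ih.1.symm, fun e s t hs ht hlen => Std.Symm.symm _ _ (ih.2 e t s ht hs ?_)⟩
    rw [length_eq hs, Multiset.card_add, ← ih.1, ← Multiset.card_add] at hlen
    rwa [length_eq ht]
  | @trans x y z _ _ ih₁ ih₂ =>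
    refine ⟨ih₁.1.trans ih₂.1, fun e s t hs ht hlen => ?_⟩
    have hmid : (((y + e).toList : List A) : Multiset A) = y + e := Multiset.coe_toList _
    refine (ih₁.2 e s _ hs hmid hlen).trans (ih₂.2 e _ t hmid ht ?_)
    rw [length_eq hs, Multiset.card_add, ih₁.1, ← Multiset.card_add] at hlen
    rwa [length_eq hmid]
  | @add w x y z _ _ ih₁ ih₂ =>
    refine ⟨by simp only [Multiset.card_add, ih₁.1, ih₂.1], fun e s t hs ht hlen => ?_⟩
    have hmid : (((x + y + e).toList : List A) : Multiset A) = x + y + e := Multiset.coe_toList _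
    refine (ih₁.2 (y + e) s _ (by rw [hs, add_assoc]) (by rw [hmid, add_assoc]) hlen).trans
      (ih₂.2 (x + e) _ t (by rw [hmid]; abel) (by rw [ht]; abel) ?_)
    rw [length_eq hs, Multiset.card_add, Multiset.card_add, ih₁.1] at hlen
    rw [length_eq hmid, Multiset.card_add, Multiset.card_add]
    omega

end FreeMonoid

/-- **Rewriting within weight classes of a commutative-monoid weight.**
Let `A` be a finite type, `M` a commutative monoid and `φ : FreeMonoid A →* M` a monoid
homomorphism.  Then there exists `m : ℕ` such that for all `n ≥ m`, any two lists `s, t`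
over `A` of length `n` with `φ s = φ t` are connected by a finite chain of rewriting
steps, where each step replaces a factor `x` of length `m` by a factor `y` of length `m`
with `φ x = φ y`. -/
theorem freeMonoid_weightClass_rewriting {A : Type*} [Fintype A]
    {M : Type*} [CommMonoid M] (φ : FreeMonoid A →* M) :
    ∃ m : ℕ, ∀ n : ℕ, m ≤ n → ∀ s t : List A, s.length = n → t.length = n →
      φ (FreeMonoid.ofList s) = φ (FreeMonoid.ofList t) →
      Relation.ReflTransGen
        (fun p q : List A => ∃ u v x y : List A,
          x.length = m ∧ y.length = m ∧
          φ (FreeMonoid.ofList x) = φ (FreeMonoid.ofList y) ∧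
          p = u ++ x ++ v ∧ q = u ++ y ++ v)
        s t := by
  obtain ⟨G, hGfin, hG⟩ := (FreeMonoid.weightClassCon φ).exists_finite_addConGen_eq ℚ
  obtain ⟨B, hB⟩ := (hGfin.image fun p => Multiset.card p.1).bddAbove
  refine ⟨max 2 B, fun n hn s t hs ht hst => ?_⟩
  have hgen (p) (hp : p ∈ G) :
      Multiset.card p.1 ≤ max 2 B ∧ FreeMonoid.weightClassCon φ p.1 p.2 :=
    ⟨(hB ⟨p, hp, rfl⟩).trans (le_max_right _ _), hG ▸ AddConGen.Rel.of _ _ hp⟩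
  have hst' : addConGen (fun a b => (a, b) ∈ G) s t := by
    rw [hG, FreeMonoid.weightClassCon_coe_iff]
    exact ⟨hs.trans ht.symm, hst⟩
  exact (FreeMonoid.reflTransGen_factorRewrite_of_addConGen (le_max_left 2 B) hgen hst').2 0 s t
    (add_zero _).symm (add_zero _).symm (hs ▸ hn)
end

section
/- Let A be a finite type, M an additive commutative monoid, and w : A → M. Then there exists m ∈ ℕ such that for all n ≥ m: the group of φ-conservative permutations of (Fin n → A) equals the subgroup of Perm(Fin n → A) generated by the transpositions (x y) of pairs of distinct words x, y : Fin n → A that agree on all coordinates outside some m-element subset S of Fin n and satisfy ∑_{i ∈ S} w(x i) = ∑_{i ∈ S} w(y i). -/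
/-- The φ-weight of a word `x : Fin n → A` with respect to a symbol weighting
`w : A → M` into an additive commutative monoid. -/
def phiWeight {A M : Type*} [AddCommMonoid M] (w : A → M) {n : ℕ}
    (x : Fin n → A) : M :=
  ∑ i, w (x i)

/-!
A word's φ-weight depends only on its content (the multiset of its letters), through the additive
map `a ↦ (card a, ∑_{c ∈ a} w c)`. The kernel of this map is a congruence on `Multiset A`; by
Rédei's theorem (the Hilbert basis theorem applied to the binomials `X^a - X^b` in
`ℚ[Multiset A]`) it is generated by finitely many pairs, all of size at most some `m`. A chain of
such pairs joining the contents of two words of equal weight lifts to a chain of words, each step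
rewriting at most `m` letters or transposing two coordinates. Hence the swaps of local moves
connect every weight class, and swaps within the blocks of a partition generate exactly the
permutations preserving it.
-/

open Finset Relation

theorem AddCon.exists_finset_addConGen_eq {N : Type*} [AddCommMonoid N] [AddMonoid.FG N]
    (c : AddCon N) : ∃ P : Finset (N × N), addConGen (fun a b => (a, b) ∈ P) = c := by
  classical
  have : IsNoetherianRing (AddMonoidAlgebra ℚ N) := Algebra.FiniteType.isNoetherianRing ℚ _
  let binomial : N × N → AddMonoidAlgebra ℚ N := fun p =>
    AddMonoidAlgebra.single p.1 1 - AddMonoidAlgebra.single p.2 1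
  obtain ⟨s, hsc, hspan⟩ := (Submodule.fg_span_iff_fg_span_finset_subset
    (R := AddMonoidAlgebra ℚ N) (binomial '' {p | c p.1 p.2})).mp (IsNoetherian.noetherian _)
  obtain ⟨P, hPc, rfl⟩ := Finset.subset_set_image_iff.mp hsc
  refine ⟨P, le_antisymm (AddCon.addConGen_le.mpr fun a b h => hPc h) fun a b hab => ?_⟩
  let φ := AddMonoidAlgebra.mapDomainRingHom ℚ (addConGen fun a b => (a, b) ∈ P).mk'
  have hφ : ∀ a b, φ (binomial (a, b)) = 0 ↔ addConGen (fun a b => (a, b) ∈ P) a b := by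
    intro a b
    rw [map_sub, sub_eq_zero]
    simp only [φ, AddMonoidAlgebra.mapDomainRingHom_apply, AddMonoidAlgebra.mapDomain_single]
    exact (AddMonoidAlgebra.single_left_inj one_ne_zero).trans (AddCon.eq _)
  have hker : Ideal.span (binomial '' {p | c p.1 p.2}) ≤ RingHom.ker φ := by
    rw [Ideal.span, hspan, Submodule.span_le]
    rintro _ hp
    obtain ⟨⟨a, b⟩, hab, rfl⟩ := Finset.mem_image.mp hp
    exact (hφ a b).mpr (AddConGen.Rel.of _ _ hab)
  exact (hφ a b).mp (hker (Ideal.subset_span ⟨(a, b), hab, rfl⟩))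

section AddTranslate

variable {N : Type*} [AddCommMonoid N] {r : N → N → Prop}

def AddTranslate (r : N → N → Prop) (p q : N) : Prop :=
  ∃ t a b, r a b ∧ p = t + a ∧ q = t + b

theorem Relation.ReflTransGen.addTranslate_add_right {p q : N}
    (h : ReflTransGen (AddTranslate r) p q) (s : N) : ReflTransGen (AddTranslate r) (p + s) (q + s) :=
  h.lift (· + s) (fun _ _ ⟨t, a, b, hab, hp, hq⟩ =>
    ⟨t + s, a, b, hab, by rw [hp, add_right_comm], by rw [hq, add_right_comm]⟩)

theorem reflTransGen_addTranslate_of_addConGen (hr : ∀ a b, r a b → r b a) {p q : N}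
    (h : addConGen r p q) : ReflTransGen (AddTranslate r) p q := by
  have : Std.Symm (AddTranslate r) :=
    ⟨fun _ _ ⟨t, a, b, hab, hp, hq⟩ => ⟨t, b, a, hr a b hab, hq, hp⟩⟩
  induction h with
  | of a b hab => exact .single ⟨0, a, b, hab, (zero_add a).symm, (zero_add b).symm⟩
  | refl => exact .refl
  | symm _ ih => exact Std.Symm.symm _ _ ih
  | trans _ _ ih₁ ih₂ => exact ih₁.trans ih₂
  | @add a b c d _ _ ih₁ ih₂ =>
    refine (ih₁.addTranslate_add_right c).trans ?_
    simpa only [add_comm b] using ih₂.addTranslate_add_right b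

end AddTranslate

instance Multiset.addMonoidFG {σ : Type*} [Finite σ] : AddMonoid.FG (Multiset σ) := by
  classical
  have : AddMonoid.FG (σ →₀ ℕ) := Module.Finite.iff_addMonoid_fg.mp inferInstance
  exact AddMonoid.fg_of_surjective Multiset.toFinsupp.symm.toAddMonoidHom
    Multiset.toFinsupp.symm.surjective

def AddCon.restrictCard {σ : Type*} (c : AddCon (Multiset σ)) (k : ℕ) (a b : Multiset σ) : Prop :=
  c a b ∧ a.card ≤ k ∧ b.card ≤ k

theorem AddCon.exists_reflTransGen_addTranslate_card_le {σ : Type*} [Finite σ]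
    (c : AddCon (Multiset σ)) :
    ∃ m, ∀ k, m ≤ k → ∀ p q, c p q →
      ReflTransGen (AddTranslate (c.restrictCard k)) p q := by
  obtain ⟨P, hP⟩ := c.exists_finset_addConGen_eq
  set bound : Multiset σ × Multiset σ → ℕ := fun g => max g.1.card g.2.card
  refine ⟨P.sup bound, fun k hk p q hpq => ?_⟩
  have hP_le : ∀ g ∈ P, bound g ≤ k := fun g hg => (le_sup hg).trans hk
  refine reflTransGen_addTranslate_of_addConGen (fun a b ⟨h, ha, hb⟩ => ⟨c.symm h, hb, ha⟩) ?_
  rw [← hP] at hpq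
  refine AddCon.addConGen_mono (fun a b hab => ⟨?_, ?_, ?_⟩) hpq
  · exact hP ▸ AddConGen.Rel.of _ _ hab
  · exact (le_max_left _ _).trans (hP_le _ hab)
  · exact (le_max_right _ _).trans (hP_le _ hab)

namespace Equiv.Perm

variable {α : Type*} [DecidableEq α] {r : α → α → Prop}

theorem mem_orbit_closure_swaps_of_reflTransGen {x y : α} (h : ReflTransGen r x y) :
    y ∈ MulAction.orbit (Subgroup.closure {σ | ∃ x y, x ≠ y ∧ r x y ∧ σ = swap x y}) x := by
  induction h with
  | refl => exact MulAction.mem_orbit_self x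
  | @tail y z _ hyz ih =>
    rw [← MulAction.orbit_eq_iff.mpr ih]
    by_cases hne : y = z
    · exact hne ▸ MulAction.mem_orbit_self y
    · exact ⟨⟨swap y z, Subgroup.subset_closure ⟨y, z, hne, hyz, rfl⟩⟩, swap_apply_left y z⟩

theorem mem_closure_swaps_iff {β : Type*} [Finite α] {f : α → β}
    (hr : ∀ x y, r x y → f x = f y) (hf : ∀ x y, f x = f y → ReflTransGen r x y) (g : Perm α) :
    g ∈ Subgroup.closure {σ | ∃ x y, x ≠ y ∧ r x y ∧ σ = swap x y} ↔ ∀ x, f (g x) = f x := by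
  constructor
  · refine fun hg => Subgroup.closure_induction (p := fun h _ => ∀ x, f (h x) = f x)
      ?_ (fun _ => rfl) (fun a b _ _ ha hb x => (ha (b x)).trans (hb x))
      (fun a _ ha x => by simpa using (ha (a⁻¹ x)).symm) hg
    rintro _ ⟨x, y, -, hxy, rfl⟩ z
    rw [swap_apply_def]
    split_ifs <;> simp_all [hr x y hxy]
  · refine fun hg => (mem_closure_isSwap ?_).mpr ⟨Set.toFinite _, fun x =>
      mem_orbit_closure_swaps_of_reflTransGen (hf x (g x) (hg x).symm)⟩
    rintro _ ⟨x, y, hxy, -, rfl⟩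
    exact ⟨x, y, hxy, rfl⟩

end Equiv.Perm

namespace Word

section Content

variable {ι A M : Type*} [AddCommMonoid M]

def content (x : ι → A) (S : Finset ι) : Multiset A :=
  ∑ i ∈ S, {x i}

theorem card_content (x : ι → A) (S : Finset ι) : (content x S).card = #S := by
  simp [content]

theorem content_congr {x y : ι → A} {S : Finset ι} (h : ∀ i ∈ S, x i = y i) :
    content x S = content y S :=
  sum_congr rfl fun i hi => by rw [h i hi]

theorem content_add_content_compl [Fintype ι] [DecidableEq ι] (x : ι → A) (S : Finset ι) :
    content x S + content x Sᶜ = content x univ :=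
  sum_add_sum_compl S _

theorem exists_content_eq [DecidableEq ι] (S : Finset ι) (a : Multiset A) (ha : a.card = #S)
    (y : ι → A) : ∃ x, (∀ i ∉ S, x i = y i) ∧ content x S = a := by
  induction S using Finset.induction_on generalizing a with
  | empty => exact ⟨y, fun _ _ => rfl, by simp_all [content]⟩
  | insert i S hi ih =>
    obtain ⟨c, hc⟩ := Multiset.card_pos_iff_exists_mem.mp
      (by rw [ha, card_insert_of_notMem hi]; omega)
    obtain ⟨b, rfl⟩ := Multiset.exists_cons_of_mem hc
    obtain ⟨x, hx, hxS⟩ := ih b (by simpa [card_insert_of_notMem hi] using ha)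
    refine ⟨Function.update x i c, fun j hj => ?_, ?_⟩
    · rw [Function.update_of_ne (ne_of_mem_of_not_mem (mem_insert_self i S) hj).symm,
        hx j (fun h => hj (mem_insert_of_mem h))]
    · rw [content, sum_insert hi, ← content,
        content_congr fun j hj => Function.update_of_ne (ne_of_mem_of_not_mem hj hi) c x,
        hxS, Function.update_self, Multiset.singleton_add]

theorem exists_content_eq_and_compl [Fintype ι] [DecidableEq ι] (S : Finset ι)
    {a t : Multiset A} (ha : a.card = #S) (ht : t.card = #Sᶜ) (y : ι → A) :
    ∃ x, content x S = a ∧ content x Sᶜ = t := by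
  obtain ⟨x₀, -, hx₀⟩ := exists_content_eq Sᶜ t ht y
  obtain ⟨x, hx, hxS⟩ := exists_content_eq S a ha x₀
  exact ⟨x, hxS, (content_congr fun i hi => hx i (mem_compl.mp hi)).trans hx₀⟩

theorem exists_perm_comp_eq_of_content_eq [Fintype ι] [DecidableEq A] {x y : ι → A}
    (h : content x univ = content y univ) : ∃ σ : Equiv.Perm ι, x = y ∘ σ := by
  have hcard : ∀ c, Fintype.card {i // x i = c} = Fintype.card {i // y i = c} := fun c => by
    simpa [content, Multiset.count_sum', Multiset.count_singleton, Fintype.card_subtype,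
      eq_comm] using congrArg (Multiset.count c) h
  exact ⟨Equiv.ofFiberEquiv fun c => Fintype.equivOfCardEq (hcard c),
    funext fun i => (Equiv.ofFiberEquiv_map _ i).symm⟩

def weightHom (w : A → M) : Multiset A →+ ℕ × M :=
  Multiset.sumAddMonoidHom.comp (Multiset.mapAddMonoidHom fun a => (1, w a))

theorem weightHom_fst (w : A → M) (a : Multiset A) : (weightHom w a).1 = a.card := by
  induction a using Multiset.induction_on <;> simp_all [weightHom, add_comm]

theorem weightHom_content (w : A → M) (x : ι → A) (S : Finset ι) :
    weightHom w (content x S) = (#S, ∑ i ∈ S, w (x i)) := by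
  simp [content, weightHom, map_sum, Prod.ext_iff, Prod.fst_sum, Prod.snd_sum]

end Content

section LocalMoves

variable {ι A M : Type*} [Fintype ι] [DecidableEq ι] [AddCommMonoid M] {w : A → M} {m : ℕ}

def IsLocalMove (w : A → M) (m : ℕ) (x y : ι → A) : Prop :=
  ∃ S : Finset ι, #S = m ∧ (∀ i ∉ S, x i = y i) ∧ ∑ i ∈ S, w (x i) = ∑ i ∈ S, w (y i)

theorem IsLocalMove.sum_eq {x y : ι → A} (h : IsLocalMove w m x y) :
    ∑ i, w (x i) = ∑ i, w (y i) := by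
  obtain ⟨S, -, hout, hS⟩ := h
  rw [← sum_add_sum_compl S, ← sum_add_sum_compl S, hS]
  exact congrArg _ (sum_congr rfl fun i hi => by rw [hout i (mem_compl.mp hi)])

theorem isLocalMove_of_card_le (hm : m ≤ Fintype.card ι) {x y : ι → A} (S : Finset ι)
    (hS : #S ≤ m) (hout : ∀ i ∉ S, x i = y i)
    (hsum : ∑ i ∈ S, w (x i) = ∑ i ∈ S, w (y i)) : IsLocalMove w m x y := by
  obtain ⟨T, hST, hT⟩ := exists_superset_card_eq hS hm
  refine ⟨T, hT, fun i hi => hout i fun h => hi (hST h), ?_⟩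
  rw [← sum_sdiff hST, ← sum_sdiff hST, hsum]
  exact congrArg (· + _) (sum_congr rfl fun i hi => by rw [hout i (mem_sdiff.mp hi).2])

theorem isLocalMove_comp_swap (h2 : 2 ≤ m) (hm : m ≤ Fintype.card ι) (x : ι → A) (i j : ι) :
    IsLocalMove w m x (x ∘ Equiv.swap i j) := by
  refine isLocalMove_of_card_le hm {i, j} (card_le_two.trans h2) (fun k hk => ?_) ?_
  · simp only [mem_insert, mem_singleton, not_or] at hk
    simp [Equiv.swap_apply_of_ne_of_ne hk.1 hk.2]
  · by_cases hij : i = j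
    · simp [hij]
    · simp [sum_pair hij, add_comm]

theorem reflTransGen_comp_perm (h2 : 2 ≤ m) (hm : m ≤ Fintype.card ι) (σ : Equiv.Perm ι) :
    ∀ x : ι → A, ReflTransGen (IsLocalMove w m) x (x ∘ σ) := by
  induction σ using Equiv.Perm.swap_induction_on with
  | one => exact fun x => .refl
  | swap_mul σ i j _ ih => exact fun x => .head (isLocalMove_comp_swap h2 hm x i j) (ih _)

theorem reflTransGen_of_content_eq [DecidableEq A] (h2 : 2 ≤ m) (hm : m ≤ Fintype.card ι)
    {x y : ι → A} (h : content x univ = content y univ) : ReflTransGen (IsLocalMove w m) x y := by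
  obtain ⟨σ, rfl⟩ := exists_perm_comp_eq_of_content_eq h.symm
  exact reflTransGen_comp_perm h2 hm σ x

variable [DecidableEq A]

theorem exists_reflTransGen_of_addTranslate (h2 : 2 ≤ m) (hm : m ≤ Fintype.card ι)
    {x : ι → A} {q : Multiset A}
    (h : AddTranslate ((AddCon.ker (weightHom w)).restrictCard m) (content x univ) q) :
    ∃ y, content y univ = q ∧ ReflTransGen (IsLocalMove w m) x y := by
  obtain ⟨t, a, b, ⟨hab, ha, -⟩, hx, rfl⟩ := h
  rw [AddCon.ker_rel] at hab
  have hn : t.card + a.card = Fintype.card ι := by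
    rw [← Multiset.card_add, ← hx, card_content, card_univ]
  have ha' : a.card ≤ #(univ : Finset ι) := by rw [card_univ]; omega
  obtain ⟨S, -, hS⟩ := exists_subset_card_eq ha'
  have hSc : t.card = #Sᶜ := by rw [card_compl, hS]; omega
  obtain ⟨u, huS, huSc⟩ := exists_content_eq_and_compl S hS.symm hSc x
  obtain ⟨y, hy, hyS⟩ := exists_content_eq S b
    (by rw [← weightHom_fst w, ← hab, weightHom_fst, hS]) u
  have hySc : content y Sᶜ = t := (content_congr fun i hi => hy i (mem_compl.mp hi)).trans huSc
  refine ⟨y, by rw [← content_add_content_compl, hyS, hySc, add_comm], ?_⟩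
  have hxu : ReflTransGen (IsLocalMove w m) x u := reflTransGen_of_content_eq h2 hm
    (by rw [hx, ← content_add_content_compl u S, huS, huSc, add_comm])
  refine hxu.tail (isLocalMove_of_card_le hm S (hS ▸ ha) (fun i hi => (hy i hi).symm) ?_)
  rw [← huS, ← hyS, weightHom_content, weightHom_content] at hab
  exact congrArg Prod.snd hab

theorem exists_reflTransGen_of_reflTransGen_addTranslate (h2 : 2 ≤ m)
    (hm : m ≤ Fintype.card ι) {x : ι → A} {q : Multiset A}
    (h : ReflTransGen (AddTranslate ((AddCon.ker (weightHom w)).restrictCard m))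
      (content x univ) q) :
    ∃ y, content y univ = q ∧ ReflTransGen (IsLocalMove w m) x y := by
  induction h with
  | refl => exact ⟨x, rfl, .refl⟩
  | tail _ hpq ih =>
    obtain ⟨y, rfl, hxy⟩ := ih
    obtain ⟨z, hz, hyz⟩ := exists_reflTransGen_of_addTranslate h2 hm hpq
    exact ⟨z, hz, hxy.trans hyz⟩

theorem reflTransGen_isLocalMove_of_sum_eq (h2 : 2 ≤ m) (hm : m ≤ Fintype.card ι)
    (hgen : ∀ p q, AddCon.ker (weightHom w) p q →
      ReflTransGen (AddTranslate ((AddCon.ker (weightHom w)).restrictCard m)) p q)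
    {x y : ι → A} (h : ∑ i, w (x i) = ∑ i, w (y i)) : ReflTransGen (IsLocalMove w m) x y := by
  have hcon : AddCon.ker (weightHom w) (content x univ) (content y univ) := by
    rw [AddCon.ker_rel, weightHom_content, weightHom_content, h]
  obtain ⟨z, hz, hxz⟩ :=
    exists_reflTransGen_of_reflTransGen_addTranslate h2 hm (hgen _ _ hcon)
  exact hxz.trans (reflTransGen_of_content_eq h2 hm hz)

end LocalMoves

end Word

/-- **Swaps within φ-weight classes generate the φ-conservative group.**
Let `A` be a finite type, `M` an additive commutative monoid and `w : A → M`.  Then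
there exists `m : ℕ` such that for all `n ≥ m`: a permutation `g` of `Fin n → A` is
φ-conservative (preserves the weight `∑ i, w (x i)` of every word) if and only if it
lies in the subgroup of `Perm (Fin n → A)` generated by the transpositions of pairs of
distinct words `x ≠ y` that agree outside some `m`-element subset `S` of the
coordinates and satisfy `∑ i ∈ S, w (x i) = ∑ i ∈ S, w (y i)`. -/
theorem phiConservative_generated_by_local_swaps
    {A : Type*} [Fintype A] [DecidableEq A] {M : Type*} [AddCommMonoid M]
    (w : A → M) :
    ∃ m : ℕ, ∀ n : ℕ, m ≤ n → ∀ g : Equiv.Perm (Fin n → A),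
      g ∈ Subgroup.closure
          {σ : Equiv.Perm (Fin n → A) |
            ∃ (S : Finset (Fin n)) (x y : Fin n → A),
              S.card = m ∧ x ≠ y ∧ (∀ i ∉ S, x i = y i) ∧
              (∑ i ∈ S, w (x i)) = (∑ i ∈ S, w (y i)) ∧
              σ = Equiv.swap x y} ↔
        ∀ x : Fin n → A, phiWeight w (g x) = phiWeight w x := by
  obtain ⟨m₀, hm₀⟩ := (AddCon.ker (Word.weightHom w)).exists_reflTransGen_addTranslate_card_le
  refine ⟨max 2 m₀, fun n hn g => ?_⟩
  have hgens : {σ : Equiv.Perm (Fin n → A) |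
      ∃ (S : Finset (Fin n)) (x y : Fin n → A),
        S.card = max 2 m₀ ∧ x ≠ y ∧ (∀ i ∉ S, x i = y i) ∧
        (∑ i ∈ S, w (x i)) = (∑ i ∈ S, w (y i)) ∧ σ = Equiv.swap x y} =
      {σ | ∃ x y, x ≠ y ∧ Word.IsLocalMove w (max 2 m₀) x y ∧ σ = Equiv.swap x y} :=
    Set.ext fun _ =>
      ⟨fun ⟨S, x, y, hS, hxy, hout, hsum, hσ⟩ => ⟨x, y, hxy, ⟨S, hS, hout, hsum⟩, hσ⟩,
        fun ⟨x, y, hxy, ⟨S, hS, hout, hsum⟩, hσ⟩ => ⟨S, x, y, hS, hxy, hout, hsum, hσ⟩⟩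
  rw [hgens]
  exact Equiv.Perm.mem_closure_swaps_iff (fun _ _ h => h.sum_eq)
    (fun _ _ h => Word.reflTransGen_isLocalMove_of_sum_eq (le_max_left _ _)
      (by simpa using hn) (hm₀ _ (le_max_right _ _)) h) g
end

section
/- Let A be a finite type and n ≥ 2. Consider the following controlled 3-word-cycles: for distinct coordinates i, j : Fin n, symbols a, b, c, d ∈ A with a ≠ d and b ≠ c, and a function w assigning a symbol to every coordinate outside {i, j}, take the 3-cycle of the three pairwise distinct words that equal w outside {i, j} and whose values at (i, j) are (a, b), (a, c), (d, b) respectively (cycling (a,b) → (a,c) → (d,b) → (a,b)), fixing all other words. Then the subgroup of Perm(Fin n → A) generated by all such controlled 3-word-cycles equals the alternating group of (Fin n → A). -/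
set_option maxHeartbeats 1000000

open Equiv Function Finset

set_option linter.unusedSectionVars false

section TC

variable {α : Type*} [DecidableEq α]

/-- The 3-cycle `x ↦ y ↦ z ↦ x`. -/
def tc (x y z : α) : Equiv.Perm α := Equiv.swap x z * Equiv.swap x y

lemma tc_rot {x y z : α} (hxy : x ≠ y) (hxz : x ≠ z) (hyz : y ≠ z) :
    tc x y z = tc y z x := by
  ext a
  simp only [tc, Equiv.Perm.mul_apply, swap_apply_def]
  split_ifs <;> simp_all

lemma tc_inv (x y z : α) : (tc x y z)⁻¹ = tc x z y := by
  rw [tc, tc, mul_inv_rev, swap_inv, swap_inv]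

lemma tc_split {x y z w : α} (hxy : x ≠ y) (hxz : x ≠ z) (hxw : x ≠ w)
    (hyz : y ≠ z) (hyw : y ≠ w) (hzw : z ≠ w) :
    tc x y z = tc x w z * tc x y w := by
  ext a
  simp only [tc, Equiv.Perm.mul_apply, swap_apply_def]
  split_ifs <;> simp_all

lemma isThreeCycle_eq_tc {α : Type*} [Fintype α] [DecidableEq α] {σ : Equiv.Perm α}
    (h : σ.IsThreeCycle) :
    ∃ x y z : α, x ≠ y ∧ x ≠ z ∧ y ≠ z ∧ σ = tc x y z := by
  obtain ⟨x, hx, -⟩ := h.isCycle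
  have h3 : σ ^ 3 = 1 := by rw [← h.orderOf]; exact pow_orderOf_eq_one σ
  have h3x : σ (σ (σ x)) = x := by
    have : (σ ^ 3) x = x := by rw [h3]; rfl
    simpa [pow_succ, Equiv.Perm.mul_apply] using this
  have hxy : x ≠ σ x := Ne.symm hx
  have hxz : x ≠ σ (σ x) := by
    intro he
    apply hx
    conv_lhs => rw [he]
    rw [h3x]
  have hyz : σ x ≠ σ (σ x) := fun he => hxy (σ.injective he)
  refine ⟨x, σ x, σ (σ x), hxy, hxz, hyz, ?_⟩
  have hsub : ({x, σ x, σ (σ x)} : Finset α) ⊆ σ.support := by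
    intro a ha
    simp only [mem_insert, mem_singleton] at ha
    rw [Equiv.Perm.mem_support]
    rcases ha with rfl | rfl | rfl
    · exact hx
    · exact fun he => hyz he.symm
    · intro he
      rw [h3x] at he
      exact hxz he
  have hcard : ({x, σ x, σ (σ x)} : Finset α).card = 3 := by
    rw [card_insert_of_notMem (by simp [hxy, hxz]),
      card_insert_of_notMem (by simp [hyz]), card_singleton]
  have hsupp : ({x, σ x, σ (σ x)} : Finset α) = σ.support :=
    Finset.eq_of_subset_of_card_le hsub (by rw [hcard]; exact le_of_eq h.card_support)
  ext a
  by_cases hax : a = x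
  · subst hax
    rw [tc, Equiv.Perm.mul_apply, swap_apply_left, swap_apply_of_ne_of_ne hxy.symm hyz]
  · by_cases hay : a = σ x
    · subst hay
      rw [tc, Equiv.Perm.mul_apply, swap_apply_right, swap_apply_left]
    · by_cases haz : a = σ (σ x)
      · subst haz
        rw [tc, Equiv.Perm.mul_apply, swap_apply_of_ne_of_ne (Ne.symm hxz) (Ne.symm hyz),
          swap_apply_right, h3x]
      · have : a ∉ σ.support := by
          rw [← hsupp]; simp [hax, hay, haz]
        rw [Equiv.Perm.notMem_support] at this
        rw [tc, Equiv.Perm.mul_apply, swap_apply_of_ne_of_ne hax hay,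
          swap_apply_of_ne_of_ne hax haz, this]

end TC

section Hamming

variable {ι A : Type*} [Fintype ι] [DecidableEq ι] [DecidableEq A]

lemma hd_eq_card (x y : ι → A) :
    hammingDist x y = (Finset.univ.filter fun i => x i ≠ y i).card := rfl

lemma mem_dset {x y : ι → A} {i : ι} :
    i ∈ (Finset.univ.filter fun i => x i ≠ y i) ↔ x i ≠ y i := by simp

lemma hd_update_self {y : ι → A} {k : ι} {b : A} (hb : b ≠ y k) :
    hammingDist y (update y k b) = 1 := by
  rw [hd_eq_card]
  have : (Finset.univ.filter fun i => y i ≠ update y k b i) = {k} := by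
    ext i
    simp only [mem_filter, mem_univ, true_and, mem_singleton]
    constructor
    · intro h
      by_contra hik
      exact h (by rw [update_of_ne hik])
    · rintro rfl
      rw [update_self]
      exact fun h => hb h.symm
  rw [this, card_singleton]

lemma hd_update_toward {x y : ι → A} {k : ι} (h : x k ≠ y k) :
    hammingDist x (update y k (x k)) + 1 = hammingDist x y := by
  rw [hd_eq_card, hd_eq_card]
  have he : (Finset.univ.filter fun i => x i ≠ update y k (x k) i)
      = (Finset.univ.filter fun i => x i ≠ y i).erase k := by
    ext i
    simp only [mem_filter, mem_univ, true_and, mem_erase]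
    by_cases hik : i = k
    · subst hik; simp [update_self]
    · simp [update_of_ne hik, hik]
  rw [he, card_erase_of_mem (mem_dset.mpr h)]
  have : 0 < (Finset.univ.filter fun i => x i ≠ y i).card :=
    card_pos.mpr ⟨k, mem_dset.mpr h⟩
  omega

lemma exists_update_of_hd_eq_one {x y : ι → A} (h : hammingDist x y = 1) :
    ∃ k b, b ≠ x k ∧ y = update x k b := by
  rw [hd_eq_card, card_eq_one] at h
  obtain ⟨k, hk⟩ := h
  have hmem : x k ≠ y k := by
    have : k ∈ ({k} : Finset ι) := mem_singleton_self k
    rw [← hk] at this; exact mem_dset.mp this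
  refine ⟨k, y k, fun hb => hmem hb.symm, funext fun i => ?_⟩
  by_cases hik : i = k
  · subst hik; rw [update_self]
  · rw [update_of_ne hik]
    by_contra hne
    have : i ∈ ({k} : Finset ι) := by
      rw [← hk]; exact mem_dset.mpr fun he => hne he.symm
    exact hik (mem_singleton.mp this)

lemma exists_ne_far {x y : ι → A} (h : 2 ≤ hammingDist x y) (j : ι) :
    ∃ k, k ≠ j ∧ x k ≠ y k := by
  rw [hd_eq_card] at h
  obtain ⟨k, hk, hkj⟩ :=
    Finset.exists_mem_ne (s := Finset.univ.filter fun i => x i ≠ y i) (by omega) j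
  exact ⟨k, hkj, mem_dset.mp hk⟩

lemma hd_pos_of_ne {x y : ι → A} (h : x ≠ y) : 1 ≤ hammingDist x y := by
  have := hammingDist_pos.mpr h
  omega

end Hamming

section Main

variable {A : Type*} [Fintype A] [DecidableEq A] {n : ℕ}

def genSet (A : Type*) [Fintype A] [DecidableEq A] (n : ℕ) :
    Set (Equiv.Perm (Fin n → A)) :=
  {σ : Equiv.Perm (Fin n → A) |
    ∃ (i j : Fin n) (a b c d : A) (w : ∀ k : Fin n, k ≠ i → k ≠ j → A),
      i ≠ j ∧ a ≠ d ∧ b ≠ c ∧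
      σ = Equiv.swap
            (fun k => if h1 : k = i then a else if h2 : k = j then b else w k h1 h2)
            (fun k => if h1 : k = i then d else if h2 : k = j then b else w k h1 h2)
        * Equiv.swap
            (fun k => if h1 : k = i then a else if h2 : k = j then b else w k h1 h2)
            (fun k => if h1 : k = i then a else if h2 : k = j then c else w k h1 h2)}

lemma gen_mem (x : Fin n → A) {i j : Fin n} (hij : i ≠ j) {c d : A}
    (hc : c ≠ x j) (hd : d ≠ x i) :
    tc x (update x j c) (update x i d) ∈ Subgroup.closure (genSet A n) := by
  apply Subgroup.subset_closure
  refine ⟨i, j, x i, x j, c, d, fun k _ _ => x k, hij, fun h => hd h.symm,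
    fun h => hc h.symm, ?_⟩
  have hX : (fun k => if h1 : k = i then x i else if h2 : k = j then x j else x k) = x := by
    funext k
    by_cases h1 : k = i
    · subst h1; simp
    · by_cases h2 : k = j
      · subst h2; simp [h1]
      · simp [h1, h2]
  have hY : (fun k => if h1 : k = i then x i else if h2 : k = j then c else x k)
      = update x j c := by
    funext k
    by_cases h1 : k = i
    · subst h1; simp [update_of_ne hij]
    · by_cases h2 : k = j
      · subst h2; simp [h1]
      · simp [h1, h2, update_of_ne h2]
  have hZ : (fun k => if h1 : k = i then d else if h2 : k = j then x j else x k)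
      = update x i d := by
    funext k
    by_cases h1 : k = i
    · subst h1; simp
    · by_cases h2 : k = j
      · subst h2; simp [h1, update_of_ne (Ne.symm hij)]
      · simp [h1, h2, update_of_ne h1]
  rw [hX, hY, hZ, tc]

/-- Lemma A'': both `y` and `z` at Hamming distance 1 from `x`. -/
lemma adj_adj (hn : 2 ≤ n) {x y z : Fin n → A}
    (hxy : hammingDist x y = 1) (hxz : hammingDist x z = 1) (hyz : y ≠ z) :
    tc x y z ∈ Subgroup.closure (genSet A n) := by
  obtain ⟨jy, β, hβ, rfl⟩ := exists_update_of_hd_eq_one hxy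
  obtain ⟨jz, δ, hδ, rfl⟩ := exists_update_of_hd_eq_one hxz
  by_cases hjj : jz = jy
  · subst hjj
    have hβδ : β ≠ δ := by
      intro h; exact hyz (by rw [h])
    haveI : Nontrivial (Fin n) := by
      rw [← Fintype.one_lt_card_iff_nontrivial, Fintype.card_fin]; omega
    obtain ⟨j, hj⟩ := exists_ne jz
    haveI : Nontrivial A := nontrivial_of_ne β (x jz) hβ
    obtain ⟨v, hv⟩ := exists_ne (x j)
    set y := update x jz β with hy
    set z := update x jz δ with hz
    set w := update x j v with hw
    have hxy' : x ≠ y := fun h => hβ (by rw [h, hy]; simp)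
    have hxz' : x ≠ z := fun h => hδ (by rw [h, hz]; simp)
    have hxw' : x ≠ w := fun h => hv (by rw [h, hw]; simp)
    have hyw' : y ≠ w := by
      intro h
      have := congrFun h jz
      rw [hy, hw, update_self, update_of_ne hj.symm] at this
      exact hβ this
    have hzw' : z ≠ w := by
      intro h
      have := congrFun h jz
      rw [hz, hw, update_self, update_of_ne hj.symm] at this
      exact hδ this
    rw [tc_split hxy' hxz' hxw' hyz hyw' hzw']
    exact Subgroup.mul_mem _ (gen_mem x (Ne.symm hj) hv hδ) (gen_mem x hj hβ hv)
  · exact gen_mem x hjj hβ hδ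

lemma claim_aux (hn : 2 ≤ n) :
    ∀ m : ℕ, ∀ u v z : Fin n → A, hammingDist u v = 1 → z ≠ u → z ≠ v →
      hammingDist u z ≤ hammingDist v z → hammingDist u z + hammingDist v z ≤ m →
      tc u v z ∈ Subgroup.closure (genSet A n) := by
  intro m
  induction m with
  | zero =>
    intro u v z huv hzu hzv _ hm
    have := hd_pos_of_ne (fun h : u = z => hzu h.symm)
    omega
  | succ m ih =>
    intro u v z huv hzu hzv hle hm
    have huv' : u ≠ v := by
      intro h
      rw [h, hammingDist_self] at huv
      omega
    rcases Nat.lt_or_ge (hammingDist u z) 2 with h1 | h2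
    · have hduz : hammingDist u z = 1 := by
        have := hd_pos_of_ne (fun h : u = z => hzu h.symm); omega
      exact adj_adj hn huv hduz (fun h => hzv h.symm)
    · have hdvz : 2 ≤ hammingDist v z := le_trans h2 hle
      obtain ⟨jv, βv, hβv, hveq⟩ := exists_update_of_hd_eq_one huv
      obtain ⟨k, hkj, hkuz⟩ := exists_ne_far h2 jv
      set w := update z k (u k) with hwdef
      have hvk : v k = u k := by rw [hveq, update_of_ne hkj]
      have hduw : hammingDist u w + 1 = hammingDist u z := hd_update_toward hkuz
      have hdvw : hammingDist v w + 1 = hammingDist v z := by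
        have hvkz : v k ≠ z k := by rw [hvk]; exact hkuz
        have h' := hd_update_toward (x := v) (y := z) (k := k) hvkz
        rw [hwdef, ← hvk]
        exact h'
      have hdwz : hammingDist w z = 1 := by
        rw [hammingDist_comm]
        exact hd_update_self hkuz
      have huw : u ≠ w := by
        intro h
        rw [← h, hammingDist_self] at hduw
        omega
      have hvw : v ≠ w := by
        intro h
        rw [← h, hammingDist_self] at hdvw
        omega
      have hwz : w ≠ z := by
        intro h
        have := congrFun h k
        rw [hwdef, update_self] at this
        exact hkuz this
      rw [tc_split huv' (fun h => hzu h.symm) huw (fun h => hzv h.symm) hvw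
        (fun h => hwz h.symm)]
      refine Subgroup.mul_mem _ ?_ ?_
      · -- tc u w z = tc w z u, use ih on (w, z, u)
        rw [tc_rot huw (fun h => hzu h.symm) hwz]
        have hc1 : hammingDist w u = hammingDist u w := hammingDist_comm _ _
        have hc2 : hammingDist z u = hammingDist u z := hammingDist_comm _ _
        exact ih w z u hdwz huw hzu.symm (by omega) (by omega)
      · exact ih u v w huv (Ne.symm huw) (Ne.symm hvw) (by omega) (by omega)

lemma claim1 (hn : 2 ≤ n) {u v z : Fin n → A} (huv : hammingDist u v = 1)
    (hzu : z ≠ u) (hzv : z ≠ v) : tc u v z ∈ Subgroup.closure (genSet A n) := by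
  have huv' : u ≠ v := by
    intro h; rw [h, hammingDist_self] at huv; omega
  rcases le_total (hammingDist u z) (hammingDist v z) with h | h
  · exact claim_aux hn _ u v z huv hzu hzv h le_rfl
  · have hmem := claim_aux hn _ v u z (by rwa [hammingDist_comm] at huv) hzv hzu h le_rfl
    have heq : tc u v z = (tc v u z)⁻¹ := by
      rw [tc_inv, tc_rot huv' (fun h => hzu h.symm) (fun h => hzv h.symm)]
    rw [heq]
    exact Subgroup.inv_mem _ hmem

lemma claim2 (hn : 2 ≤ n) : ∀ m : ℕ, ∀ x y z : Fin n → A, x ≠ y → x ≠ z → y ≠ z →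
    hammingDist x y ≤ m → tc x y z ∈ Subgroup.closure (genSet A n) := by
  intro m
  induction m with
  | zero =>
    intro x y z hxy _ _ hm
    have := hd_pos_of_ne hxy
    omega
  | succ m ih =>
    intro x y z hxy hxz hyz hm
    rcases Nat.lt_or_ge (hammingDist x y) 2 with h1 | h2
    · have hd1 : hammingDist x y = 1 := by have := hd_pos_of_ne hxy; omega
      exact claim1 hn hd1 (Ne.symm hxz) (Ne.symm hyz)
    · obtain ⟨k, hk, hwz⟩ : ∃ k, x k ≠ y k ∧ update y k (x k) ≠ z := by
        by_cases hex : ∃ k0, x k0 ≠ y k0 ∧ update y k0 (x k0) = z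
        · obtain ⟨k0, hk0, hk0z⟩ := hex
          obtain ⟨k, hkk0, hk⟩ := exists_ne_far h2 k0
          refine ⟨k, hk, fun h => ?_⟩
          have h2' := congrFun (h.trans hk0z.symm) k0
          rw [update_of_ne (Ne.symm hkk0), update_self] at h2'
          exact hk0 h2'.symm
        · push_neg at hex
          obtain ⟨k, _, hk⟩ := exists_ne_far h2 ⟨0, by omega⟩
          exact ⟨k, hk, hex k hk⟩
      set w := update y k (x k) with hwdef
      have hdyw : hammingDist y w = 1 := hd_update_self hk
      have hdxw : hammingDist x w + 1 = hammingDist x y := hd_update_toward hk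
      have hxw : x ≠ w := by
        intro h
        rw [← h, hammingDist_self] at hdxw
        omega
      have hyw : y ≠ w := by
        intro h
        have := congrFun h k
        rw [hwdef, update_self] at this
        exact hk this.symm
      rw [tc_split hxy hxz hxw hyz hyw (fun h => hwz h.symm)]
      refine Subgroup.mul_mem _ ?_ ?_
      · exact ih x w z hxw hxz hwz (by omega)
      · rw [tc_rot hxy hxw hyw]
        exact claim1 hn hdyw hxy hxw

lemma gen_subset_alternating :
    genSet A n ⊆ (alternatingGroup (Fin n → A) : Subgroup (Equiv.Perm (Fin n → A))) := by
  rintro σ ⟨i, j, a, b, c, d, w, hij, had, hbc, rfl⟩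
  have hXZ : (fun k => if h1 : k = i then a else if h2 : k = j then b else w k h1 h2)
      ≠ (fun k => if h1 : k = i then d else if h2 : k = j then b else w k h1 h2) := by
    intro h
    have := congrFun h i
    simp only [dif_pos] at this
    exact had this
  have hXY : (fun k => if h1 : k = i then a else if h2 : k = j then b else w k h1 h2)
      ≠ (fun k => if h1 : k = i then a else if h2 : k = j then c else w k h1 h2) := by
    intro h
    have := congrFun h j
    rw [dif_neg hij.symm, dif_neg hij.symm, dif_pos rfl, dif_pos rfl] at this
    exact hbc this
  rw [SetLike.mem_coe, Equiv.Perm.mem_alternatingGroup, Equiv.Perm.sign_mul,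
    Equiv.Perm.sign_swap hXZ, Equiv.Perm.sign_swap hXY]
  norm_num

theorem controlledThreeWordCycles_generate_alternating'
    {A : Type*} [Fintype A] [DecidableEq A] (n : ℕ) (hn : 2 ≤ n) :
    Subgroup.closure (genSet A n) = alternatingGroup (Fin n → A) := by
  apply le_antisymm
  · exact (Subgroup.closure_le _).mpr gen_subset_alternating
  · rw [← Equiv.Perm.closure_three_cycles_eq_alternating]
    refine (Subgroup.closure_le _).mpr ?_
    intro σ hσ
    obtain ⟨x, y, z, hxy, hxz, hyz, rfl⟩ := isThreeCycle_eq_tc hσ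
    exact claim2 hn (hammingDist x y) x y z hxy hxz hyz le_rfl

end Main

/-- **Controlled 3-word-cycles generate the alternating group.**
Let `A` be a finite type and `n ≥ 2`.  For distinct coordinates `i ≠ j` in `Fin n`,
symbols `a, b, c, d ∈ A` with `a ≠ d` and `b ≠ c`, and an assignment `w` of a symbol to
every coordinate outside `{i, j}`, consider the 3-cycle of the three (pairwise distinct)
words equal to `w` outside `{i,j}` whose values at `(i,j)` are `(a,b)`, `(a,c)` and
`(d,b)` respectively, cycling `(a,b) ↦ (a,c) ↦ (d,b) ↦ (a,b)` and fixing all other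
words.  The subgroup of `Perm (Fin n → A)` generated by all such controlled
3-word-cycles equals the alternating group of `Fin n → A`. -/
theorem controlledThreeWordCycles_generate_alternating
    {A : Type*} [Fintype A] [DecidableEq A] (n : ℕ) (hn : 2 ≤ n) :
    Subgroup.closure
        {σ : Equiv.Perm (Fin n → A) |
          ∃ (i j : Fin n) (a b c d : A) (w : ∀ k : Fin n, k ≠ i → k ≠ j → A),
            i ≠ j ∧ a ≠ d ∧ b ≠ c ∧
            σ = Equiv.swap
                  (fun k => if h1 : k = i then a else if h2 : k = j then b else w k h1 h2)
                  (fun k => if h1 : k = i then d else if h2 : k = j then b else w k h1 h2)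
              * Equiv.swap
                  (fun k => if h1 : k = i then a else if h2 : k = j then b else w k h1 h2)
                  (fun k => if h1 : k = i then a else if h2 : k = j then c else w k h1 h2)} =
      alternatingGroup (Fin n → A) :=
  controlledThreeWordCycles_generate_alternating' n hn
end

section
/- Let A be a finite type, M an additive commutative monoid, and w : A → M. Then there exists m ∈ ℕ such that for all n ≥ m: the group of alternating φ-conservative permutations of (Fin n → A) equals the subgroup of Perm(Fin n → A) generated by the 3-cycles (x y z) of triples of pairwise distinct words x, y, z : Fin n → A that agree on all coordinates outside some m-element subset S of Fin n and satisfy ∑_{i ∈ S} w(x i) = ∑_{i ∈ S} w(y i) = ∑_{i ∈ S} w(z i). -/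
/-!
The weight of a word depends only on its multiset of letters. By Hilbert's basis theorem the
ideal generated by the binomials `X ^ s - X ^ t`, over pairs of multisets of equal size and
weight, is generated by finitely many of them, so finitely many exchanges `s ↔ t` generate that
congruence (Rédei). Performing exchanges on windows of positions, and permuting positions by
transpositions, joins any two words of equal weight by a chain of local moves: changes of at
most `m₀` positions that keep the weight of the changed window.

Three words forming a path of two local moves agree outside at most `2 m₀` positions, so their
3-cycle is a generator. Conjugating by such generators moves a point of a 3-cycle along a local
move, which reaches every 3-cycle of words of equal weight. These generate the alternating group
of each weight class, and an alternating φ-conservative permutation is the product of its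
restrictions to the classes. Conversely a generator preserves weight and has order 3, so its
restriction to each class is even.
-/

open scoped Classical

/-- A permutation of words is *alternating φ-conservative* if it preserves the φ-weight
of every word and its restriction to each φ-weight class is an even permutation. -/
noncomputable def IsAltPhiConservative {A M : Type*} [Fintype A] [DecidableEq A]
    [AddCommMonoid M] (w : A → M) {n : ℕ} (f : Equiv.Perm (Fin n → A)) : Prop :=
  (∀ x : Fin n → A, phiWeight w (f x) = phiWeight w x) ∧
  ∀ (c : M) (h : ∀ x : Fin n → A, phiWeight w x = c ↔ phiWeight w (f x) = c),
    Equiv.Perm.sign (f.subtypePerm (p := fun x => phiWeight w x = c) (fun x => (h x).symm)) = 1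

namespace PhiConservative

open Equiv Relation Finset

section Redei

variable {G : Type*} [AddCommMonoid G]

def ExchangeStep (P : Set (G × G)) (u v : G) : Prop :=
  ∃ p ∈ P, ∃ c, u = p.1 + c ∧ v = p.2 + c

variable (R : Type*) [CommRing R]

noncomputable def binomial (p : G × G) : AddMonoidAlgebra R G :=
  AddMonoidAlgebra.single p.1 1 - AddMonoidAlgebra.single p.2 1

variable [Nontrivial R]

variable {R} in
theorem eqvGen_exchangeStep_of_mem_span {P : Set (G × G)} {u v : G}
    (h : binomial R (u, v) ∈ Ideal.span (binomial R '' P)) : EqvGen (ExchangeStep P) u v := by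
  let L : AddMonoidAlgebra R G →+ (Quot (ExchangeStep P) →₀ R) :=
    (Finsupp.mapDomain.addMonoidHom (Quot.mk _)).comp
      AddMonoidAlgebra.coeffAddEquiv.toAddMonoidHom
  have hL : ∀ g a, L (AddMonoidAlgebra.single g a) = Finsupp.single (Quot.mk _ g) a :=
    fun g a => Finsupp.mapDomain_single
  have hker : ∀ x ∈ Ideal.span (binomial R '' P), ∀ r, L (r * x) = 0 := by
    intro x hx
    induction hx using Submodule.span_induction with
    | mem x hx =>
      obtain ⟨p, hp, rfl⟩ := hx
      intro r
      induction r using AddMonoidAlgebra.induction_linear with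
      | zero => rw [zero_mul, map_zero]
      | add r s hr hs => rw [add_mul, map_add, hr, hs, add_zero]
      | single g a =>
        rw [binomial, mul_sub, AddMonoidAlgebra.single_mul_single,
          AddMonoidAlgebra.single_mul_single, mul_one, map_sub, hL, hL, sub_eq_zero]
        exact congrArg (Finsupp.single · a)
          (Quot.sound ⟨p, hp, g, add_comm _ _, add_comm _ _⟩)
    | zero => simp
    | add x y _ _ hx hy => intro r; rw [mul_add, map_add, hx, hy, add_zero]
    | smul a x _ hx => intro r; rw [smul_eq_mul, ← mul_assoc]; exact hx _
  have := hker _ h 1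
  rw [one_mul, binomial, map_sub, hL, hL, sub_eq_zero,
    Finsupp.single_left_inj one_ne_zero] at this
  exact Quot.eqvGen_exact this

theorem exists_finset_eqvGen_exchangeStep [IsNoetherianRing (AddMonoidAlgebra R G)]
    (P : Set (G × G)) :
    ∃ T : Finset (G × G), ↑T ⊆ P ∧ ∀ p ∈ P, EqvGen (ExchangeStep ↑T) p.1 p.2 := by
  obtain ⟨s, hsP, hspan⟩ := (Submodule.fg_span_iff_fg_span_finset_subset (binomial R '' P)).mp
    (IsNoetherian.noetherian (R := AddMonoidAlgebra R G) _)
  obtain ⟨T, hTP, rfl⟩ := Finset.subset_set_image_iff.mp hsP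
  refine ⟨T, hTP, fun p hp => eqvGen_exchangeStep_of_mem_span (R := R) ?_⟩
  have : binomial R p ∈ Ideal.span (binomial R '' P) := Ideal.subset_span ⟨p, hp, rfl⟩
  rwa [Ideal.span, hspan, Finset.coe_image] at this

instance {A : Type*} [Finite A] : IsNoetherianRing (AddMonoidAlgebra ℚ (Multiset A)) :=
  isNoetherianRing_of_ringEquiv (MvPolynomial A ℚ)
    (AddMonoidAlgebra.domCongr ℚ ℚ Multiset.toFinsupp.symm).toRingEquiv

end Redei

section Words

variable {A M ι : Type*} [AddCommMonoid M] (w : A → M)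

def LocalEq (S : Finset ι) (x y : ι → A) : Prop :=
  (∀ i ∉ S, x i = y i) ∧ ∑ i ∈ S, w (x i) = ∑ i ∈ S, w (y i)

def LocalStep (m : ℕ) (x y : ι → A) : Prop :=
  ∃ S : Finset ι, #S ≤ m ∧ LocalEq w S x y

variable {w}

namespace LocalEq

variable {S T : Finset ι} {x y z : ι → A}

theorem symm (h : LocalEq w S x y) : LocalEq w S y x :=
  ⟨fun i hi => (h.1 i hi).symm, h.2.symm⟩

theorem mono (h : LocalEq w S x y) (hST : S ⊆ T) : LocalEq w T x y := by
  refine ⟨fun i hi => h.1 i fun hS => hi (hST hS), ?_⟩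
  rw [← sum_sdiff hST, ← sum_sdiff hST (f := fun i => w (y i)), h.2]
  congr 1
  exact sum_congr rfl fun i hi => by rw [h.1 i (mem_sdiff.mp hi).2]

theorem trans (h : LocalEq w S x y) (h' : LocalEq w S y z) : LocalEq w S x z :=
  ⟨fun i hi => (h.1 i hi).trans (h'.1 i hi), h.2.trans h'.2⟩

theorem phiWeight_eq {n : ℕ} {S : Finset (Fin n)} {x y : Fin n → A} (h : LocalEq w S x y) :
    phiWeight w x = phiWeight w y :=
  (h.mono (subset_univ S)).2

end LocalEq

theorem localEq_comp_perm {S : Finset ι} (x : ι → A) {σ : Perm ι} (hσ : {i | σ i ≠ i} ⊆ S) :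
    LocalEq w S x (x ∘ σ) :=
  ⟨fun i hi => by rw [Function.comp_apply, not_not.mp fun h => hi (hσ h)],
    (σ.sum_comp S (fun i => w (x i)) hσ).symm⟩

theorem LocalStep.symm {m : ℕ} {x y : ι → A} (h : LocalStep w m x y) : LocalStep w m y x :=
  let ⟨S, hS, hxy⟩ := h; ⟨S, hS, hxy.symm⟩

theorem localStep_swap [DecidableEq ι] {m : ℕ} (hm : 2 ≤ m) (x : ι → A) (i j : ι) :
    LocalStep w m x (x ∘ swap i j) :=
  ⟨{i, j}, (card_le_two).trans hm, localEq_comp_perm x fun k hk => by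
    by_contra h
    simp only [coe_insert, coe_singleton, Set.mem_insert_iff, Set.mem_singleton_iff, not_or] at h
    exact hk (swap_apply_of_ne_of_ne h.1 h.2)⟩

theorem reflTransGen_localStep_comp_perm [Finite ι] {m : ℕ} (hm : 2 ≤ m) (x : ι → A)
    (σ : Perm ι) : ReflTransGen (LocalStep w m) x (x ∘ σ) := by
  induction σ using Perm.swap_induction_on' with
  | one => exact .refl
  | mul_swap σ i j _ ih => exact ih.tail (localStep_swap hm (x ∘ σ) i j)

instance {m : ℕ} : Std.Symm (LocalStep w m : (ι → A) → (ι → A) → Prop) :=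
  ⟨fun _ _ => LocalStep.symm⟩

theorem exists_subset_map_val_eq (x : ι → A) {s : Multiset A} {T : Finset ι}
    (h : s ≤ T.val.map x) : ∃ S ⊆ T, S.val.map x = s := by
  induction s using Multiset.induction_on generalizing T with
  | empty => exact ⟨∅, empty_subset T, rfl⟩
  | cons a s ih =>
    obtain ⟨i, hi, rfl⟩ := Multiset.mem_map.mp (Multiset.mem_of_le h (Multiset.mem_cons_self _ s))
    have hT : T.val.map x = x i ::ₘ (T.erase i).val.map x := by
      rw [← Multiset.map_cons, erase_val, Multiset.cons_erase hi]
    obtain ⟨S, hS, rfl⟩ := ih (by rwa [hT, Multiset.cons_le_cons_iff] at h)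
    refine ⟨cons i S fun hiS => by simpa using hS hiS, ?_, by rw [cons_val, Multiset.map_cons]⟩
    exact cons_subset.mpr ⟨hi, hS.trans (erase_subset i T)⟩

theorem exists_eqOn_compl_map_val_eq (x : ι → A) {S : Finset ι} {t : Multiset A}
    (h : #S = Multiset.card t) : ∃ y : ι → A, (∀ i ∉ S, y i = x i) ∧ S.val.map y = t := by
  induction S using Finset.cons_induction generalizing t with
  | empty => exact ⟨x, fun _ _ => rfl, (Multiset.card_eq_zero.mp h.symm).symm⟩
  | cons i S hi ih =>
    obtain ⟨a, ha⟩ := Multiset.card_pos_iff_exists_mem.mp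
      (by rw [← h, card_cons]; exact (#S).succ_pos)
    obtain ⟨t, rfl⟩ := Multiset.exists_cons_of_mem ha
    obtain ⟨y, hyx, hyt⟩ := ih (t := t) (by rwa [card_cons, Multiset.card_cons, add_left_inj] at h)
    refine ⟨Function.update y i a, fun j hj => ?_, ?_⟩
    · rw [Function.update_of_ne (by rintro rfl; simp at hj)]
      exact hyx j fun h => hj (mem_cons_of_mem h)
    · rw [cons_val, Multiset.map_cons, Function.update_self, ← hyt]
      congr 1
      exact Multiset.map_congr rfl fun j hj =>
        Function.update_of_ne (by rintro rfl; exact hi hj) _ _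

theorem sum_eq_sum_map_val (x : ι → A) (S : Finset ι) :
    ∑ i ∈ S, w (x i) = ((S.val.map x).map w).sum := by
  rw [Multiset.map_map]; rfl

variable [Fintype ι]

theorem exists_perm_comp_eq {x y : ι → A}
    (h : univ.val.map x = univ.val.map y) : ∃ σ : Perm ι, x ∘ σ = y := by
  have hfib : ∀ a, Fintype.card {i // y i = a} = Fintype.card {i // x i = a} := by
    intro a
    have := congrArg (Multiset.count a) h
    rw [Multiset.count_map, Multiset.count_map] at this
    rw [Fintype.card_subtype, Fintype.card_subtype]
    simp only [eq_comm (a := a)] at this ⊢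
    exact this.symm
  exact ⟨ofFiberEquiv fun a => Fintype.equivOfCardEq (hfib a),
    funext (ofFiberEquiv_map _)⟩

theorem univ_val_map_eq_add (x : ι → A) (S : Finset ι) :
    univ.val.map x = S.val.map x + Sᶜ.val.map x := by
  rw [← Multiset.map_add, compl_eq_univ_sdiff, sdiff_val,
    add_tsub_cancel_of_le (val_le_iff.mpr (subset_univ S))]

theorem exists_localStep_of_map_eq_add {m : ℕ} {x : ι → A} {s t c : Multiset A}
    (hx : univ.val.map x = s + c) (hcard : Multiset.card s = Multiset.card t)
    (hm : Multiset.card s ≤ m) (hw : (s.map w).sum = (t.map w).sum) :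
    ∃ y, univ.val.map y = t + c ∧ LocalStep w m x y := by
  obtain ⟨S, -, hS⟩ := exists_subset_map_val_eq x (hx ▸ Multiset.le_add_right s c)
  have hSs : #S = Multiset.card s := by rw [← hS, Multiset.card_map]; rfl
  obtain ⟨y, hyx, hyt⟩ := exists_eqOn_compl_map_val_eq x (hSs.trans hcard)
  have hc : Sᶜ.val.map x = c := add_left_cancel (hS ▸ (univ_val_map_eq_add x S).symm.trans hx)
  have hcy : Sᶜ.val.map y = Sᶜ.val.map x :=
    Multiset.map_congr rfl fun i hi => hyx i (mem_compl.mp hi)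
  refine ⟨y, by rw [univ_val_map_eq_add y S, hyt, hcy, hc], S, hSs ▸ hm,
    fun i hi => (hyx i hi).symm, ?_⟩
  rw [sum_eq_sum_map_val, sum_eq_sum_map_val, hS, hyt, hw]

theorem exists_reflTransGen_localStep_of_reflTransGen {m : ℕ} {T : Set (Multiset A × Multiset A)}
    (hT : ∀ p ∈ T, Multiset.card p.1 = Multiset.card p.2 ∧ (p.1.map w).sum = (p.2.map w).sum ∧
      Multiset.card p.1 ≤ m)
    {u v : Multiset A} (huv : ReflTransGen (SymmGen (ExchangeStep T)) u v) {x : ι → A}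
    (hx : univ.val.map x = u) :
    ∃ y, univ.val.map y = v ∧ ReflTransGen (LocalStep w m) x y := by
  induction huv with
  | refl => exact ⟨x, hx, .refl⟩
  | tail _ hstep ih =>
    obtain ⟨y, hy, hxy⟩ := ih
    rcases hstep with ⟨p, hp, c, rfl, rfl⟩ | ⟨p, hp, c, rfl, rfl⟩ <;>
      obtain ⟨hcard, hsum, hm⟩ := hT p hp
    · obtain ⟨z, hz, hyz⟩ := exists_localStep_of_map_eq_add hy hcard hm hsum
      exact ⟨z, hz, hxy.tail hyz⟩
    · obtain ⟨z, hz, hyz⟩ := exists_localStep_of_map_eq_add hy hcard.symm (hcard ▸ hm) hsum.symm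
      exact ⟨z, hz, hxy.tail hyz⟩

theorem exists_localStep_ne_of_localStep [DecidableEq ι] {m : ℕ} (hm : 2 ≤ m)
    (hι : m + 3 ≤ Fintype.card ι) {a b : ι → A} (hab : a ≠ b) (h : LocalStep w m a b)
    (f g : ι → A) :
    ∃ u, u ≠ a ∧ u ≠ b ∧ u ≠ f ∧ u ≠ g ∧ (LocalStep w m a u ∨ LocalStep w m b u) := by
  obtain ⟨S, hS, hoff, -⟩ := h
  obtain ⟨s, hs⟩ := Function.ne_iff.mp hab
  have hsS : s ∈ S := by_contra fun h => hs (hoff s h)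
  -- for `j ∉ S`, swapping positions `s` and `j` in `a` or in `b` changes the letter at `j`
  let u : ι → ι → A := fun j => if a s = a j then b ∘ swap s j else a ∘ swap s j
  have hu_self : ∀ j ∉ S, u j j ≠ a j := by
    intro j hj
    by_cases h : a s = a j
    · simpa [u, h, ← hoff j hj] using (h ▸ hs).symm
    · simp [u, h]
  have hu_off : ∀ j ∉ S, ∀ k ∉ S, k ≠ j → u j k = a k := by
    intro j _ k hk hkj
    have hks : k ≠ s := fun h => hk (h ▸ hsS)
    by_cases h : a s = a j <;> simp [u, h, swap_apply_of_ne_of_ne hks hkj, hoff k hk]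
  have hu_step : ∀ j, LocalStep w m a (u j) ∨ LocalStep w m b (u j) := by
    intro j
    by_cases h : a s = a j
    · simpa [u, h] using .inr (localStep_swap hm b s j)
    · simpa [u, h] using .inl (localStep_swap hm a s j)
  have hinj : Set.InjOn u ↑Sᶜ := by
    intro j hj j' hj' he
    by_contra hne
    exact hu_self j (mem_compl.mp hj) (congrFun he j ▸ hu_off j' (mem_compl.mp hj') j
      (mem_compl.mp hj) hne)
  have hcard : #{f, g} < #(Sᶜ.image u) := by
    rw [card_image_of_injOn hinj, card_compl]
    have := card_le_two (a := f) (b := g)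
    omega
  obtain ⟨v, hv, hvfg⟩ := exists_mem_notMem_of_card_lt_card hcard
  obtain ⟨j, hj, rfl⟩ := mem_image.mp hv
  have hj' := mem_compl.mp hj
  simp only [mem_insert, mem_singleton, not_or] at hvfg
  exact ⟨u j, fun h => hu_self j hj' (congrFun h j),
    fun h => hu_self j hj' (h ▸ (hoff j hj').symm), hvfg.1, hvfg.2, hu_step j⟩

theorem exists_reflTransGen_localStep [Finite A] (w : A → M) :
    ∃ m, 2 ≤ m ∧ ∀ (n : ℕ) (x y : Fin n → A), phiWeight w x = phiWeight w y →
      ReflTransGen (LocalStep w m) x y := by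
  obtain ⟨T, hTP, hT⟩ := exists_finset_eqvGen_exchangeStep ℚ
    {p : Multiset A × Multiset A | Multiset.card p.1 = Multiset.card p.2 ∧
      (p.1.map w).sum = (p.2.map w).sum}
  let m := max 2 (T.sup fun p => Multiset.card p.1)
  have hTm : ∀ p ∈ T, Multiset.card p.1 ≤ m :=
    fun p hp => (le_sup (f := fun p => Multiset.card p.1) hp).trans (le_max_right _ _)
  refine ⟨m, le_max_left _ _, fun n x y hxy => ?_⟩
  have hchain := hT (univ.val.map x, univ.val.map y)
    ⟨by simp, by rwa [← sum_eq_sum_map_val, ← sum_eq_sum_map_val]⟩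
  rw [← EqvGen.reflTransGen_symmGen] at hchain
  obtain ⟨y', hy', hxy'⟩ := exists_reflTransGen_localStep_of_reflTransGen
    (fun p hp => ⟨(hTP hp).1, (hTP hp).2, hTm p hp⟩) hchain (x := x) rfl
  obtain ⟨σ, rfl⟩ := exists_perm_comp_eq hy'
  exact hxy'.trans (reflTransGen_localStep_comp_perm (le_max_left _ _) y' σ)

end Words

section ThreeCycles

variable {α : Type*} [DecidableEq α]

/-- The 3-cycle `a ↦ b ↦ c ↦ a`, for pairwise distinct `a b c`. -/
def threeCycle (a b c : α) : Perm α := swap a c * swap a b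

variable {a b c d : α}

theorem threeCycle_apply_left (hab : a ≠ b) (hbc : b ≠ c) : threeCycle a b c a = b := by
  rw [threeCycle, Perm.mul_apply, swap_apply_left, swap_apply_of_ne_of_ne hab.symm hbc]

theorem threeCycle_apply_mid : threeCycle a b c b = c := by
  rw [threeCycle, Perm.mul_apply, swap_apply_right, swap_apply_left]

theorem threeCycle_apply_right (hac : a ≠ c) (hbc : b ≠ c) : threeCycle a b c c = a := by
  rw [threeCycle, Perm.mul_apply, swap_apply_of_ne_of_ne hac.symm hbc.symm, swap_apply_right]

theorem threeCycle_apply_of_ne (ha : d ≠ a) (hb : d ≠ b) (hc : d ≠ c) : threeCycle a b c d = d := by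
  rw [threeCycle, Perm.mul_apply, swap_apply_of_ne_of_ne ha hb, swap_apply_of_ne_of_ne ha hc]

theorem conj_threeCycle (σ : Perm α) :
    σ * threeCycle a b c * σ⁻¹ = threeCycle (σ a) (σ b) (σ c) := by
  rw [threeCycle, threeCycle, swap_apply_apply, swap_apply_apply]
  group

theorem threeCycle_rotate (hab : a ≠ b) (hac : a ≠ c) (hbc : b ≠ c) :
    threeCycle a b c = threeCycle b c a := by
  have h := conj_threeCycle (a := a) (b := b) (c := c) (threeCycle a b c)
  rwa [mul_inv_cancel_right, threeCycle_apply_left hab hbc, threeCycle_apply_mid,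
    threeCycle_apply_right hac hbc] at h

variable {r : α → α → Prop} {H : Subgroup (Perm α)}

theorem threeCycle_mem_of_rel
    (hpath : ∀ a b c, a ≠ b → a ≠ c → b ≠ c → r a b → r b c → threeCycle a b c ∈ H)
    (hab : a ≠ b) (hac : a ≠ c) (hbc : b ≠ c) (h : r a b) (h' : r b c ∨ r c a) :
    threeCycle a b c ∈ H := by
  rcases h' with h' | h'
  · exact hpath a b c hab hac hbc h h'
  · rw [threeCycle_rotate hab hac hbc, threeCycle_rotate hbc hab.symm hac.symm]
    exact hpath c a b hac.symm hbc.symm hab h' h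

variable [Std.Symm r]

theorem threeCycle_mem_of_reflTransGen_of_forall
    (hpath : ∀ a b c, a ≠ b → a ≠ c → b ≠ c → r a b → r b c → threeCycle a b c ∈ H)
    (hrich : ∀ a b, a ≠ b → r a b → ∀ f g, ∃ u, u ≠ a ∧ u ≠ b ∧ u ≠ f ∧ u ≠ g ∧ (r a u ∨ r b u))
    {p q : α} (hbase : ∀ v, v ≠ p → v ≠ q → r v p ∨ r v q → threeCycle p v q ∈ H)
    {y : α} (hy : ReflTransGen r y p) (hyp : y ≠ p) (hyq : y ≠ q) : threeCycle p y q ∈ H := by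
  induction hy using ReflTransGen.head_induction_on with
  | refl => exact absurd rfl hyp
  | @head y y₁ hstep _ ih =>
    by_cases h₁p : y₁ = p
    · exact hbase y hyp hyq (.inl (h₁p ▸ hstep))
    by_cases h₁q : y₁ = q
    · exact hbase y hyp hyq (.inr (h₁q ▸ hstep))
    by_cases hyy₁ : y = y₁
    · exact hyy₁ ▸ ih h₁p h₁q
    obtain ⟨u, huy, huy₁, hup, huq, hu⟩ := hrich y y₁ hyy₁ hstep p q
    -- conjugating by `threeCycle y₁ y u`, which fixes `p` and `q`, moves `y₁` to `y`
    have hτ : threeCycle y₁ y u ∈ H := threeCycle_mem_of_rel hpath (Ne.symm hyy₁)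
      (Ne.symm huy₁) (Ne.symm huy) (symm hstep) (hu.imp id symm)
    have hconj := conj_threeCycle (a := p) (b := y₁) (c := q) (threeCycle y₁ y u)
    rw [threeCycle_apply_of_ne (Ne.symm h₁p) (Ne.symm hyp) (Ne.symm hup),
      threeCycle_apply_left (Ne.symm hyy₁) huy.symm,
      threeCycle_apply_of_ne (Ne.symm h₁q) (Ne.symm hyq) (Ne.symm huq)] at hconj
    exact hconj ▸ H.mul_mem (H.mul_mem hτ (ih h₁p h₁q)) (H.inv_mem hτ)

theorem threeCycle_mem_of_rel_of_reflTransGen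
    (hpath : ∀ a b c, a ≠ b → a ≠ c → b ≠ c → r a b → r b c → threeCycle a b c ∈ H)
    (hrich : ∀ a b, a ≠ b → r a b → ∀ f g, ∃ u, u ≠ a ∧ u ≠ b ∧ u ≠ f ∧ u ≠ g ∧ (r a u ∨ r b u))
    {p q v : α} (hpq : p ≠ q) (h : r p q) (hv : ReflTransGen r v p) (hvp : v ≠ p) (hvq : v ≠ q) :
    threeCycle p v q ∈ H := by
  refine threeCycle_mem_of_reflTransGen_of_forall hpath hrich (fun v' hv'p hv'q hv' => ?_)
    hv hvp hvq
  rw [threeCycle_rotate hv'p.symm hpq hv'q, threeCycle_rotate hv'q hv'p hpq.symm]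
  exact threeCycle_mem_of_rel hpath hpq.symm hv'q.symm hv'p.symm (symm h) (hv'.imp symm id)

theorem threeCycle_mem_of_reflTransGen
    (hpath : ∀ a b c, a ≠ b → a ≠ c → b ≠ c → r a b → r b c → threeCycle a b c ∈ H)
    (hrich : ∀ a b, a ≠ b → r a b → ∀ f g, ∃ u, u ≠ a ∧ u ≠ b ∧ u ≠ f ∧ u ≠ g ∧ (r a u ∨ r b u))
    {x y z : α} (hxy : x ≠ y) (hxz : x ≠ z) (hyz : y ≠ z)
    (hy : ReflTransGen r y x) (hz : ReflTransGen r z x) : threeCycle x y z ∈ H := by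
  refine threeCycle_mem_of_reflTransGen_of_forall hpath hrich (fun v hvx hvz hv => ?_)
    hy hxy.symm hyz
  rcases hv with hv | hv
  · rw [threeCycle_rotate hvx.symm hxz hvz]
    exact threeCycle_mem_of_rel_of_reflTransGen hpath hrich hvx hv (hz.tail (symm hv))
      hvz.symm hxz.symm
  · rw [threeCycle_rotate hvx.symm hxz hvz, threeCycle_rotate hvz hvx hxz.symm]
    exact threeCycle_mem_of_rel_of_reflTransGen hpath hrich hvz.symm (symm hv) (symm hz)
      hxz hvx.symm

end ThreeCycles

section LocalCycles

variable {A M : Type*} [DecidableEq A] [AddCommMonoid M] {w : A → M} {n : ℕ}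

variable (w) in
def localThreeCycles (m n : ℕ) : Set (Perm (Fin n → A)) :=
  {σ : Equiv.Perm (Fin n → A) |
    ∃ (S : Finset (Fin n)) (x y z : Fin n → A),
      S.card = m ∧ x ≠ y ∧ x ≠ z ∧ y ≠ z ∧
      (∀ i ∉ S, x i = y i) ∧ (∀ i ∉ S, x i = z i) ∧
      (∑ i ∈ S, w (x i)) = (∑ i ∈ S, w (y i)) ∧
      (∑ i ∈ S, w (x i)) = (∑ i ∈ S, w (z i)) ∧
      σ = Equiv.swap x z * Equiv.swap x y}

theorem threeCycle_mem_localThreeCycles {m : ℕ} (hmn : m ≤ n) {S : Finset (Fin n)} (hS : #S ≤ m)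
    {x y z : Fin n → A} (hxy : x ≠ y) (hxz : x ≠ z) (hyz : y ≠ z)
    (h₁ : LocalEq w S x y) (h₂ : LocalEq w S x z) : threeCycle x y z ∈ localThreeCycles w m n := by
  obtain ⟨T, hST, hT⟩ := exists_superset_card_eq hS (by simpa using hmn)
  exact ⟨T, x, y, z, hT, hxy, hxz, hyz, (h₁.mono hST).1, (h₂.mono hST).1, (h₁.mono hST).2,
    (h₂.mono hST).2, rfl⟩

theorem threeCycle_mem_closure_of_localStep {m₀ m : ℕ} (hm : 2 * m₀ ≤ m) (hmn : m ≤ n)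
    (x y z : Fin n → A) (hxy : x ≠ y) (hxz : x ≠ z) (hyz : y ≠ z)
    (h₁ : LocalStep w m₀ x y) (h₂ : LocalStep w m₀ y z) :
    threeCycle x y z ∈ Subgroup.closure (localThreeCycles w m n) := by
  obtain ⟨S₁, hS₁, hxy'⟩ := h₁
  obtain ⟨S₂, hS₂, hyz'⟩ := h₂
  have hxy'' := hxy'.mono (subset_union_left (s₂ := S₂))
  refine Subgroup.subset_closure (threeCycle_mem_localThreeCycles hmn ?_ hxy hxz hyz hxy''
    (hxy''.trans (hyz'.mono subset_union_right)))
  exact (card_union_le S₁ S₂).trans (by omega)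

end LocalCycles

theorem map_eq_one_of_pow_three {G : Type*} [Group G] (φ : G →* ℤˣ) {g : G}
    (hg : g ^ 3 = 1) : φ g = 1 := by
  calc φ g = φ g ^ 2 * φ g := by rw [Int.units_sq, one_mul]
    _ = 1 := by rw [← pow_succ, ← map_pow, hg, map_one]

section Assembly

variable {A M : Type*} [AddCommMonoid M] (w : A → M) (n : ℕ)

def phiConservative : Subgroup (Perm (Fin n → A)) where
  carrier := {g | ∀ x, phiWeight w (g x) = phiWeight w x}
  mul_mem' hf hg x := (hf _).trans (hg x)
  one_mem' _ := rfl
  inv_mem' {g} hg x := by simpa using (hg (g⁻¹ x)).symm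

noncomputable def restrictClass (c : M) :
    phiConservative w n →* Perm {x : Fin n → A // phiWeight w x = c} where
  toFun g := g.1.subtypePerm fun x => by rw [g.2 x]
  map_one' := Perm.subtypePerm_one _ _
  map_mul' f g := (Perm.subtypePerm_mul f.1 g.1 _ _).symm

variable [DecidableEq A]

variable {w n} in
theorem swap_mem_phiConservative {x y : Fin n → A} (h : phiWeight w x = phiWeight w y) :
    swap x y ∈ phiConservative w n := by
  intro t
  rw [swap_apply_def]
  split_ifs <;> subst_vars <;> simp [h]

variable [Fintype A]

noncomputable def altPhiConservative : Subgroup (Perm (Fin n → A)) :=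
  (⨅ c, (Perm.sign.comp (restrictClass w n c)).ker).map (phiConservative w n).subtype

variable {w n}

theorem mem_altPhiConservative {g : Perm (Fin n → A)} :
    g ∈ altPhiConservative w n ↔
      ∃ hg : g ∈ phiConservative w n, ∀ c, Perm.sign (restrictClass w n c ⟨g, hg⟩) = 1 := by
  simp [altPhiConservative, Subgroup.mem_iInf]

theorem mem_altPhiConservative_iff {g : Perm (Fin n → A)} :
    g ∈ altPhiConservative w n ↔ IsAltPhiConservative w g := by
  rw [mem_altPhiConservative]
  exact ⟨fun ⟨hg, hsign⟩ => ⟨hg, fun c _ => hsign c⟩,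
    fun ⟨hg, hsign⟩ => ⟨hg, fun c => hsign c fun x => by rw [hg x]⟩⟩

theorem threeCycle_mem_altPhiConservative {x y z : Fin n → A} (hxy : x ≠ y) (hxz : x ≠ z)
    (hyz : y ≠ z) (hwy : phiWeight w x = phiWeight w y) (hwz : phiWeight w x = phiWeight w z) :
    threeCycle x y z ∈ altPhiConservative w n := by
  have hσ : threeCycle x y z ∈ phiConservative w n :=
    mul_mem (swap_mem_phiConservative hwz) (swap_mem_phiConservative hwy)
  have h3 : (⟨_, hσ⟩ : phiConservative w n) ^ 3 = 1 := Subtype.ext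
    ((Perm.isThreeCycle_swap_mul_swap_same hxz hxy hyz.symm).orderOf ▸ pow_orderOf_eq_one _)
  exact mem_altPhiConservative.mpr
    ⟨hσ, fun c => map_eq_one_of_pow_three (Perm.sign.comp (restrictClass w n c)) h3⟩

theorem closure_localThreeCycles_le (m : ℕ) :
    Subgroup.closure (localThreeCycles w m n) ≤ altPhiConservative w n := by
  rw [Subgroup.closure_le]
  rintro _ ⟨S, x, y, z, -, hxy, hxz, hyz, hy, hz, hwy, hwz, rfl⟩
  exact threeCycle_mem_altPhiConservative hxy hxz hyz (LocalEq.phiWeight_eq ⟨hy, hwy⟩)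
    (LocalEq.phiWeight_eq ⟨hz, hwz⟩)

theorem ofSubtype_mem_of_sign_eq_one {H : Subgroup (Perm (Fin n → A))}
    (hH : ∀ x y z : Fin n → A, x ≠ y → x ≠ z → y ≠ z → phiWeight w x = phiWeight w y →
      phiWeight w x = phiWeight w z → threeCycle x y z ∈ H)
    {c : M} {τ : Perm {x : Fin n → A // phiWeight w x = c}} (hτ : Perm.sign τ = 1) :
    Perm.ofSubtype τ ∈ H := by
  have hτ' : τ ∈ Subgroup.closure {σ | σ.IsThreeCycle} := by
    rwa [Perm.closure_three_cycles_eq_alternating, Perm.mem_alternatingGroup]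
  suffices (Subgroup.closure {σ | σ.IsThreeCycle}).map
      (Perm.ofSubtype (p := fun x : Fin n → A => phiWeight w x = c)) ≤ H from
    this (Subgroup.mem_map_of_mem _ hτ')
  rw [MonoidHom.map_closure, Subgroup.closure_le]
  rintro _ ⟨σ, hσ, rfl⟩
  obtain ⟨a, ha⟩ := card_pos.mp (hσ.card_support ▸ three_pos : 0 < #σ.support)
  have hnd := hσ.nodup_iff_mem_support.mpr ha
  simp only [List.nodup_cons, List.mem_cons, List.not_mem_nil, List.nodup_nil, or_false, not_or,
    not_false_eq_true, and_true] at hnd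
  obtain ⟨⟨h₀₁, h₀₂⟩, h₁₂⟩ := hnd
  rw [hσ.eq_swap_mul_swap_iff_mem_support.mpr ha, map_mul, Perm.ofSubtype_swap_eq,
    Perm.ofSubtype_swap_eq, swap_comm]
  exact hH _ _ _ (Subtype.coe_injective.ne h₁₂) (Subtype.coe_injective.ne (Ne.symm h₀₁))
    (Subtype.coe_injective.ne (Ne.symm h₀₂)) ((σ a).2.trans (σ (σ a)).2.symm)
    ((σ a).2.trans a.2.symm)

theorem altPhiConservative_le {H : Subgroup (Perm (Fin n → A))}
    (hHK : H ≤ altPhiConservative w n)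
    (hH : ∀ x y z : Fin n → A, x ≠ y → x ≠ z → y ≠ z → phiWeight w x = phiWeight w y →
      phiWeight w x = phiWeight w z → threeCycle x y z ∈ H) :
    altPhiConservative w n ≤ H := by
  suffices ∀ F : Finset M, ∀ g ∈ altPhiConservative w n,
      (∀ x, g x ≠ x → phiWeight w x ∈ F) → g ∈ H from
    fun g hg => this (univ.image (phiWeight w)) g hg fun x _ => mem_image_of_mem _ (mem_univ x)
  intro F
  induction F using Finset.induction_on with
  | empty =>
    intro g _ hg
    have : g = 1 := Equiv.ext fun x => by_contra fun h => notMem_empty _ (hg x h)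
    exact this ▸ H.one_mem
  | insert c F _ ih =>
    intro g hgK hg
    obtain ⟨hgc, hsign⟩ := mem_altPhiConservative.mp hgK
    set gc := Perm.ofSubtype (restrictClass w n c ⟨g, hgc⟩)
    have hgcH : gc ∈ H := ofSubtype_mem_of_sign_eq_one hH (hsign c)
    rw [← mul_inv_cancel_left gc g]
    refine H.mul_mem hgcH (ih _ (mul_mem (inv_mem (hHK hgcH)) hgK) fun x hx => ?_)
    rw [Perm.mul_apply, Ne, Perm.inv_eq_iff_eq] at hx
    by_cases hxc : phiWeight w x = c
    · exact (hx (Perm.ofSubtype_apply_of_mem (restrictClass w n c ⟨g, hgc⟩) hxc).symm).elim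
    · rw [show gc x = x from Perm.ofSubtype_apply_of_not_mem _ hxc] at hx
      exact (mem_insert.mp (hg x hx)).resolve_left hxc

end Assembly

end PhiConservative

/-- **Local 3-cycles generate the alternating φ-conservative group.**
Let `A` be a finite type, `M` an additive commutative monoid and `w : A → M`.  Then
there exists `m : ℕ` such that for all `n ≥ m`: a permutation of `Fin n → A` is
alternating φ-conservative if and only if it lies in the subgroup of
`Perm (Fin n → A)` generated by the 3-cycles `(x y z)` of triples of pairwise distinct
words that agree outside some `m`-element subset `S` of the coordinates and satisfy
`∑ i ∈ S, w (x i) = ∑ i ∈ S, w (y i) = ∑ i ∈ S, w (z i)`. -/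
theorem altPhiConservative_generated_by_local_threeCycles
    {A : Type*} [Fintype A] [DecidableEq A] {M : Type*} [AddCommMonoid M]
    (w : A → M) :
    ∃ m : ℕ, ∀ n : ℕ, m ≤ n → ∀ g : Equiv.Perm (Fin n → A),
      g ∈ Subgroup.closure
          {σ : Equiv.Perm (Fin n → A) |
            ∃ (S : Finset (Fin n)) (x y z : Fin n → A),
              S.card = m ∧ x ≠ y ∧ x ≠ z ∧ y ≠ z ∧
              (∀ i ∉ S, x i = y i) ∧ (∀ i ∉ S, x i = z i) ∧
              (∑ i ∈ S, w (x i)) = (∑ i ∈ S, w (y i)) ∧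
              (∑ i ∈ S, w (x i)) = (∑ i ∈ S, w (z i)) ∧
              σ = Equiv.swap x z * Equiv.swap x y} ↔
        IsAltPhiConservative w g := by
  obtain ⟨m₀, hm₀, hconn⟩ := PhiConservative.exists_reflTransGen_localStep w
  refine ⟨2 * m₀ + 3, fun n hn g => ?_⟩
  have hHK := PhiConservative.closure_localThreeCycles_le (w := w) (n := n) (2 * m₀ + 3)
  have hcyc : ∀ x y z : Fin n → A, x ≠ y → x ≠ z → y ≠ z → phiWeight w x = phiWeight w y →
      phiWeight w x = phiWeight w z → PhiConservative.threeCycle x y z ∈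
        Subgroup.closure (PhiConservative.localThreeCycles w (2 * m₀ + 3) n) :=
    fun x y z hxy hxz hyz hwy hwz => PhiConservative.threeCycle_mem_of_reflTransGen
      (PhiConservative.threeCycle_mem_closure_of_localStep (by omega) hn)
      (fun _ _ hab h => PhiConservative.exists_localStep_ne_of_localStep hm₀
        (by rw [Fintype.card_fin]; omega) hab h)
      hxy hxz hyz (hconn n y x hwy.symm) (hconn n z x hwz.symm)
  rw [← PhiConservative.mem_altPhiConservative_iff]
  exact SetLike.ext_iff.mp (le_antisymm hHK (PhiConservative.altPhiConservative_le hHK hcyc)) g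
end

section
/- Let A be a type, Y a finite type, and X a subset of Y with at least 5 elements. Let P be the set of 3-cycles (x y z) of pairwise distinct elements x, y, z of X, regarded as permutations of Y. For a ∈ A and p ∈ P define L_{a,p} ∈ Perm(A × A × Y) by L_{a,p}(a', b', u) = (a', b', p(u)) if a' = a and = (a', b', u) otherwise; define R_{b,p} ∈ Perm(A × A × Y) by R_{b,p}(a', b', u) = (a', b', p(u)) if b' = b and = (a', b', u) otherwise. Then for all a, b ∈ A and every p ∈ P, the doubly-controlled permutation F defined by F(a', b', u) = (a', b', p(u)) if (a', b') = (a, b) and F(a', b', u) = (a', b', u) otherwise, belongs to the subgroup of Perm(A × A × Y) generated by the permutations L_{c,q} and R_{c,q} for c ∈ A and q ∈ P. -/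
/-- The 1-controlled permutation `L_{a,p}`: apply `p` on the third coordinate when the
first coordinate equals `a`. -/
def ctrlFst {A Y : Type*} [DecidableEq A] (a : A) (p : Equiv.Perm Y) :
    Equiv.Perm (A × A × Y) where
  toFun q := (q.1, q.2.1, if q.1 = a then p q.2.2 else q.2.2)
  invFun q := (q.1, q.2.1, if q.1 = a then p.symm q.2.2 else q.2.2)
  left_inv := fun ⟨q1, q2, q3⟩ => by by_cases h : q1 = a <;> simp [h]
  right_inv := fun ⟨q1, q2, q3⟩ => by by_cases h : q1 = a <;> simp [h]

/-- The 1-controlled permutation `R_{b,p}`: apply `p` on the third coordinate when the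
second coordinate equals `b`. -/
def ctrlSnd {A Y : Type*} [DecidableEq A] (b : A) (p : Equiv.Perm Y) :
    Equiv.Perm (A × A × Y) where
  toFun q := (q.1, q.2.1, if q.2.1 = b then p q.2.2 else q.2.2)
  invFun q := (q.1, q.2.1, if q.2.1 = b then p.symm q.2.2 else q.2.2)
  left_inv := fun ⟨q1, q2, q3⟩ => by by_cases h : q2 = b <;> simp [h]
  right_inv := fun ⟨q1, q2, q3⟩ => by by_cases h : q2 = b <;> simp [h]

/-- The 2-controlled permutation `F`: apply `p` on the third coordinate when the first
two coordinates equal `(a, b)`. -/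
def ctrlBoth {A Y : Type*} [DecidableEq A] (a b : A) (p : Equiv.Perm Y) :
    Equiv.Perm (A × A × Y) where
  toFun q := (q.1, q.2.1, if q.1 = a ∧ q.2.1 = b then p q.2.2 else q.2.2)
  invFun q := (q.1, q.2.1, if q.1 = a ∧ q.2.1 = b then p.symm q.2.2 else q.2.2)
  left_inv := fun ⟨q1, q2, q3⟩ => by by_cases h : q1 = a ∧ q2 = b <;> simp [h]
  right_inv := fun ⟨q1, q2, q3⟩ => by by_cases h : q1 = a ∧ q2 = b <;> simp [h]

/-- The 3-cycles `(x y z)` (i.e. `x ↦ y ↦ z ↦ x`) of pairwise distinct elements of `X`,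
regarded as permutations of `Y`. -/
def threeCyclesIn {Y : Type*} [DecidableEq Y] (X : Set Y) : Set (Equiv.Perm Y) :=
  {p | ∃ x y z : Y, x ∈ X ∧ y ∈ X ∧ z ∈ X ∧ x ≠ y ∧ x ≠ z ∧ y ≠ z ∧
    p = Equiv.swap x z * Equiv.swap x y}


lemma viaEmbedding_swap {α β : Type*} [DecidableEq α] [DecidableEq β]
    (f : α ↪ β) (i j : α) :
    (Equiv.swap i j).viaEmbedding f = Equiv.swap (f i) (f j) := by
  ext u
  by_cases h : u ∈ Set.range f
  · obtain ⟨x, rfl⟩ := h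
    rw [Equiv.Perm.viaEmbedding_apply]
    simp only [Equiv.swap_apply_def, f.injective.eq_iff]
    split_ifs <;> rfl
  · rw [Equiv.Perm.viaEmbedding_apply_of_notMem _ _ _ h,
      Equiv.swap_apply_of_ne_of_ne]
    · exact fun hu => h ⟨i, hu.symm⟩
    · exact fun hu => h ⟨j, hu.symm⟩

lemma cycle_eq_commutator {Y : Type*} [DecidableEq Y] (x y z w v : Y)
    (hxy : x ≠ y) (hxz : x ≠ z) (hxw : x ≠ w) (hxv : x ≠ v)
    (hyz : y ≠ z) (hyw : y ≠ w) (hyv : y ≠ v)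
    (hzw : z ≠ w) (hzv : z ≠ v) (hwv : w ≠ v) :
    Equiv.swap x z * Equiv.swap x y =
      (Equiv.swap x w * Equiv.swap x y) * (Equiv.swap x v * Equiv.swap x z) *
      (Equiv.swap x w * Equiv.swap x y)⁻¹ * (Equiv.swap x v * Equiv.swap x z)⁻¹ := by
  have hinj : Function.Injective ![x, y, z, w, v] := by
    intro i j hij
    fin_cases i <;> fin_cases j <;> simp_all
  let f : Fin 5 ↪ Y := ⟨![x, y, z, w, v], hinj⟩
  have key : (Equiv.swap 0 2 * Equiv.swap 0 1 : Equiv.Perm (Fin 5)) =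
      (Equiv.swap 0 3 * Equiv.swap 0 1) * (Equiv.swap 0 4 * Equiv.swap 0 2) *
      (Equiv.swap 0 3 * Equiv.swap 0 1)⁻¹ * (Equiv.swap 0 4 * Equiv.swap 0 2)⁻¹ := by
    decide
  have := congrArg (Equiv.Perm.viaEmbeddingHom f) key
  simpa only [map_mul, map_inv, Equiv.Perm.viaEmbeddingHom_apply, viaEmbedding_swap,
    show f 0 = x from rfl, show f 1 = y from rfl, show f 2 = z from rfl,
    show f 3 = w from rfl, show f 4 = v from rfl] using this

lemma ctrlFst_inv' {A Y : Type*} [DecidableEq A] (a : A) (p : Equiv.Perm Y) :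
    (ctrlFst a p)⁻¹ = ctrlFst a p⁻¹ := rfl

lemma ctrlSnd_inv' {A Y : Type*} [DecidableEq A] (b : A) (p : Equiv.Perm Y) :
    (ctrlSnd b p)⁻¹ = ctrlSnd b p⁻¹ := rfl

lemma ctrl_commutator {A Y : Type*} [DecidableEq A] (a b : A) (q r : Equiv.Perm Y) :
    ctrlFst a q * ctrlSnd b r * (ctrlFst a q)⁻¹ * (ctrlSnd b r)⁻¹
      = ctrlBoth a b (q * r * q⁻¹ * r⁻¹) := by
  rw [ctrlFst_inv', ctrlSnd_inv']
  ext ⟨a', b', u⟩ <;>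
    simp only [ctrlFst, ctrlSnd, ctrlBoth, Equiv.Perm.mul_apply, Equiv.coe_fn_mk] <;>
    by_cases h1 : a' = a <;> by_cases h2 : b' = b <;> simp [h1, h2]

/-- **2-controlled 3-cycles from 1-controlled 3-cycles** (Lemma 9 of the paper). -/
theorem two_controlled_in_one_controlled_closure
    {A Y : Type*} [DecidableEq A] [DecidableEq Y] [Fintype Y]
    (X : Set Y) (hX : 5 ≤ X.ncard) (a b : A) (p : Equiv.Perm Y)
    (hp : p ∈ threeCyclesIn X) :
    ctrlBoth a b p ∈ Subgroup.closure
      {σ : Equiv.Perm (A × A × Y) | ∃ (c : A) (q : Equiv.Perm Y),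
        q ∈ threeCyclesIn X ∧ (σ = ctrlFst c q ∨ σ = ctrlSnd c q)} := by
  obtain ⟨x, y, z, hx, hy, hz, hxy, hxz, hyz, rfl⟩ := hp
  -- find two more elements of X
  have hsub : ({x, y, z} : Set Y) ⊆ X := by
    intro u hu
    rcases hu with rfl | rfl | rfl <;> assumption
  have h3 : ({x, y, z} : Set Y).ncard ≤ 3 := by
    have h1 := Set.ncard_insert_le x ({y, z} : Set Y)
    have h2 := Set.ncard_insert_le y ({z} : Set Y)
    have h0 : ({z} : Set Y).ncard = 1 := Set.ncard_singleton z
    omega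
  have hd : 1 < (X \ ({x, y, z} : Set Y)).ncard := by
    have := Set.ncard_diff hsub (Set.toFinite _)
    have hXfin : X.Finite := Set.toFinite _
    omega
  obtain ⟨w, v, hw, hv, hwv⟩ := (Set.one_lt_ncard_iff (Set.toFinite _)).mp hd
  simp only [Set.mem_diff, Set.mem_insert_iff, Set.mem_singleton_iff, not_or] at hw hv
  obtain ⟨hwX, hwx, hwy, hwz⟩ := hw
  obtain ⟨hvX, hvx, hvy, hvz⟩ := hv
  set q := Equiv.swap x w * Equiv.swap x y with hq
  set r := Equiv.swap x v * Equiv.swap x z with hr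
  have hqP : q ∈ threeCyclesIn X :=
    ⟨x, y, w, hx, hy, hwX, hxy, Ne.symm hwx, Ne.symm hwy, rfl⟩
  have hrP : r ∈ threeCyclesIn X :=
    ⟨x, z, v, hx, hz, hvX, hxz, Ne.symm hvx, Ne.symm hvz, rfl⟩
  have hcomm : Equiv.swap x z * Equiv.swap x y = q * r * q⁻¹ * r⁻¹ :=
    cycle_eq_commutator x y z w v hxy hxz (Ne.symm hwx) (Ne.symm hvx) hyz
      (Ne.symm hwy) (Ne.symm hvy) (Ne.symm hwz) (Ne.symm hvz) hwv
  rw [hcomm, ← ctrl_commutator]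
  have hL : ctrlFst a q ∈ Subgroup.closure
      {σ : Equiv.Perm (A × A × Y) | ∃ (c : A) (q : Equiv.Perm Y),
        q ∈ threeCyclesIn X ∧ (σ = ctrlFst c q ∨ σ = ctrlSnd c q)} :=
    Subgroup.subset_closure ⟨a, q, hqP, Or.inl rfl⟩
  have hR : ctrlSnd b r ∈ Subgroup.closure
      {σ : Equiv.Perm (A × A × Y) | ∃ (c : A) (q : Equiv.Perm Y),
        q ∈ threeCyclesIn X ∧ (σ = ctrlFst c q ∨ σ = ctrlSnd c q)} :=
    Subgroup.subset_closure ⟨b, r, hrP, Or.inr rfl⟩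
  exact mul_mem (mul_mem (mul_mem hL hR) (inv_mem hL)) (inv_mem hR)
end

section
/- Let A be a finite type, M an additive commutative monoid, and w : A → M such that the induced weight homomorphism is infinite-dimensional: for every N ∈ ℕ there exists n ∈ ℕ such that there are at least N distinct values c ∈ M for which the φ-weight class {x : Fin n → A | ∑ i, w(x i) = c} has at least two elements. Then for every finite family g₁, …, g_N of φ-conservative gates, where gᵢ is a φ-conservative permutation of (Fin mᵢ → A), there exist n ∈ ℕ and a φ-conservative permutation f of (Fin n → A) that does not belong to the subgroup of Perm(Fin n → A) generated by the applications of the gates gᵢ along injections Fin mᵢ ↪ Fin n. In words: the φ-conservative revital is not finitely generated when φ is infinite-dimensional. -/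
/-- Extension of an operation on `m`-letter words to `n`-letter words along an
injection of coordinates: apply `F` on the coordinates selected by `ι`, leave
the rest unchanged. -/
noncomputable def extWord {A : Type*} {m n : ℕ} (ι : Fin m ↪ Fin n)
    (F : (Fin m → A) → (Fin m → A)) (x : Fin n → A) : Fin n → A :=
  fun k => if h : ∃ j, ι j = k then F (x ∘ ι) h.choose else x k

theorem extWord_comp {A : Type*} {m n : ℕ} (ι : Fin m ↪ Fin n)
    (F : (Fin m → A) → (Fin m → A)) (x : Fin n → A) :
    (extWord ι F x) ∘ ι = F (x ∘ ι) := by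
  funext j
  have h : ∃ j', ι j' = ι j := ⟨j, rfl⟩
  simp only [Function.comp_apply, extWord, dif_pos h]
  congr 1
  exact ι.injective h.choose_spec

/-- The application of a gate `f` of arity `m` along an injection `ι : Fin m ↪ Fin n`:
the resulting permutation `g` of words of length `n` satisfies
`(g x) (ι j) = (f (x ∘ ι)) j` for all `j : Fin m`, and `g x k = x k` for every
coordinate `k` outside the range of `ι`. -/
noncomputable def applyAlong {A : Type*} {m n : ℕ} (f : Equiv.Perm (Fin m → A))
    (ι : Fin m ↪ Fin n) : Equiv.Perm (Fin n → A) where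
  toFun := extWord ι f
  invFun := extWord ι f.symm
  left_inv x := by
    funext k
    by_cases h : ∃ j, ι j = k
    · obtain ⟨j, rfl⟩ := h
      have hj : extWord ι (⇑f.symm) (extWord ι (⇑f) x) (ι j)
          = ((extWord ι (⇑f.symm) (extWord ι (⇑f) x)) ∘ ι) j := rfl
      rw [hj, extWord_comp, extWord_comp]
      simp
    · simp only [extWord, dif_neg h]
  right_inv x := by
    funext k
    by_cases h : ∃ j, ι j = k
    · obtain ⟨j, rfl⟩ := h
      have hj : extWord ι (⇑f) (extWord ι (⇑f.symm) x) (ι j)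
          = ((extWord ι (⇑f) (extWord ι (⇑f.symm) x)) ∘ ι) j := rfl
      rw [hj, extWord_comp, extWord_comp]
      simp
    · simp only [extWord, dif_neg h]

/-- A permutation of words is *φ-conservative* if it preserves the φ-weight of every
word. -/
def IsPhiConservative {A M : Type*} [AddCommMonoid M] (w : A → M) {n : ℕ}
    (f : Equiv.Perm (Fin n → A)) : Prop :=
  ∀ x : Fin n → A, phiWeight w (f x) = phiWeight w x

/-!
A φ-conservative permutation permutes each weight class, a finite set, and the sign of the
restriction to a class is a homomorphism to `ℤˣ`. Applications of one gate along two
injections are conjugate by a permutation of coordinates, which is itself conservative, so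
every such sign takes a single value on them. On `N + 1` weight classes with at least two
elements each, the `N` gates therefore generate at most `2 ^ N` sign patterns in the
elementary abelian group `(ℤˣ) ^ (N + 1)`, whereas transpositions inside a single class
realise all `2 ^ (N + 1)` of them.
-/

open Equiv Equiv.Perm Function

section FiberSign

variable {α β : Type*}

def fiberPreservingSubgroup (φ : α → β) : Subgroup (Perm α) where
  carrier := {f | ∀ x, φ (f x) = φ x}
  one_mem' _ := rfl
  mul_mem' hf hg x := (hf _).trans (hg x)
  inv_mem' {f} hf x := by simpa using (hf (f⁻¹ x)).symm

theorem swap_mem_fiberPreservingSubgroup [DecidableEq α] {φ : α → β} {x y : α}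
    (h : φ x = φ y) : swap x y ∈ fiberPreservingSubgroup φ := by
  intro z
  rcases eq_or_ne z x with rfl | hzx
  · rw [swap_apply_left, h]
  rcases eq_or_ne z y with rfl | hzy
  · rw [swap_apply_right, h]
  · rw [swap_apply_of_ne_of_ne hzx hzy]

variable [Fintype α] [DecidableEq α] [DecidableEq β]

def fiberSign (φ : α → β) (b : β) : fiberPreservingSubgroup φ →* ℤˣ where
  toFun f := sign ((f : Perm α).subtypePerm (p := fun x => φ x = b) fun x => by rw [f.2 x])
  map_one' := Perm.sign_one
  map_mul' _ _ := by rw [← Perm.sign_mul, subtypePerm_mul]; rfl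

theorem fiberSign_apply (φ : α → β) (b : β) (f : fiberPreservingSubgroup φ) :
    fiberSign φ b f =
      sign ((f : Perm α).subtypePerm (p := fun x => φ x = b) fun x => by rw [f.2 x]) :=
  rfl

theorem fiberSign_swap {φ : α → β} {b : β} {x y : α} (hxy : x ≠ y) (hx : φ x = b)
    (hy : φ y = b) :
    fiberSign φ b ⟨swap x y, swap_mem_fiberPreservingSubgroup (hx.trans hy.symm)⟩ = -1 := by
  rw [fiberSign_apply]
  refine (sign_subtypePerm (p := fun z => φ z = b) _ _ fun z hz => ?_).trans (sign_swap hxy)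
  rcases eq_or_ne z x with rfl | hzx
  · exact hx
  rcases eq_or_ne z y with rfl | hzy
  · exact hy
  · exact absurd (swap_apply_of_ne_of_ne hzx hzy) hz

theorem fiberSign_eq_one {φ : α → β} {b : β} (f : fiberPreservingSubgroup φ)
    (hf : ∀ x, φ x = b → (f : Perm α) x = x) : fiberSign φ b f = 1 := by
  have : (f : Perm α).subtypePerm (p := fun x => φ x = b) (fun x => by rw [f.2 x]) = 1 :=
    Equiv.ext fun x => Subtype.ext (hf x x.2)
  rw [fiberSign_apply, this, Perm.sign_one]

def fiberSigns (φ : α → β) (t : Finset β) : fiberPreservingSubgroup φ →* (t → ℤˣ) :=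
  MonoidHom.pi fun b => fiberSign φ b

theorem fiberSigns_surjective {φ : α → β} {t : Finset β}
    (ht : ∀ b ∈ t, ∃ x y, x ≠ y ∧ φ x = b ∧ φ y = b) :
    Surjective (fiberSigns φ t) := by
  have hsingle : ∀ b : t, Pi.mulSingle b (-1) ∈ (fiberSigns φ t).range := by
    intro b
    obtain ⟨x, y, hxy, hx, hy⟩ := ht b b.2
    refine ⟨⟨swap x y, swap_mem_fiberPreservingSubgroup (hx.trans hy.symm)⟩,
      funext fun b' => ?_⟩
    rcases eq_or_ne b' b with rfl | hb
    · simpa [fiberSigns] using fiberSign_swap hxy hx hy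
    · rw [Pi.mulSingle_eq_of_ne hb]
      refine fiberSign_eq_one _ fun z hz => swap_apply_of_ne_of_ne ?_ ?_ <;>
        rintro rfl <;> exact hb (Subtype.ext (hz.symm.trans ‹φ _ = b›))
  intro u
  rw [← Finset.univ_prod_mulSingle u]
  refine (fiberSigns φ t).mem_range.mp (prod_mem fun b _ => ?_)
  rcases Int.units_eq_one_or (u b) with h | h <;> rw [h]
  · simp
  · exact hsingle b

end FiberSign

theorem Subgroup.card_closure_range_le_two_pow {G ι : Type*} [CommGroup G] [Fintype ι]
    (hG : ∀ g : G, g ^ 2 = 1) (v : ι → G) :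
    Nat.card (Subgroup.closure (Set.range v)) ≤ 2 ^ Fintype.card ι := by
  classical
  have hsub : (Subgroup.closure (Set.range v) : Set G) ⊆
      Set.range fun s : Finset ι => ∏ i ∈ s, v i := by
    intro x hx
    obtain ⟨a, rfl⟩ := exists_of_mem_closure_range v x hx
    refine ⟨Finset.univ.filter fun i => a i % 2 = 1, ?_⟩
    show ∏ i ∈ _ with _, v i = _
    rw [Finset.prod_filter]
    refine Finset.prod_congr rfl fun i _ => ?_
    rw [zpow_eq_zpow_emod' (a i) (hG (v i))]
    rcases Int.emod_two_eq_zero_or_one (a i) with h | h <;> simp [h]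
  calc Nat.card (Subgroup.closure (Set.range v))
      ≤ Nat.card (Set.range fun s : Finset ι => ∏ i ∈ s, v i) :=
        Nat.card_mono (Set.finite_range _) hsub
    _ ≤ Nat.card (Finset ι) := Finite.card_range_le _
    _ = 2 ^ Fintype.card ι := by simp

section Words

variable {A M : Type*} [AddCommMonoid M] {m n : ℕ}

theorem applyAlong_comp_embedding (f : Perm (Fin m → A)) (ι : Fin m ↪ Fin n)
    (x : Fin n → A) : applyAlong f ι x ∘ ι = f (x ∘ ι) :=
  extWord_comp ι f x

theorem applyAlong_apply_embedding (f : Perm (Fin m → A)) (ι : Fin m ↪ Fin n)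
    (x : Fin n → A) (j : Fin m) : applyAlong f ι x (ι j) = f (x ∘ ι) j :=
  congrFun (applyAlong_comp_embedding f ι x) j

theorem applyAlong_apply_of_notMem (f : Perm (Fin m → A)) {ι : Fin m ↪ Fin n}
    (x : Fin n → A) {k : Fin n} (hk : k ∉ Set.range ι) : applyAlong f ι x k = x k :=
  dif_neg hk

theorem phiWeight_eq_add (w : A → M) (ι : Fin m ↪ Fin n) (x : Fin n → A) :
    phiWeight w x = phiWeight w (x ∘ ι) + ∑ k ∈ (Finset.univ.map ι)ᶜ, w (x k) := by
  rw [phiWeight, ← Finset.sum_add_sum_compl (Finset.univ.map ι), Finset.sum_map]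
  rfl

theorem isPhiConservative_applyAlong {w : A → M} {f : Perm (Fin m → A)}
    (hf : IsPhiConservative w f) (ι : Fin m ↪ Fin n) :
    IsPhiConservative w (applyAlong f ι) := by
  intro x
  rw [phiWeight_eq_add w ι, phiWeight_eq_add w ι x]
  congr 1
  · rw [applyAlong_comp_embedding, hf]
  · refine Finset.sum_congr rfl fun k hk => ?_
    rw [applyAlong_apply_of_notMem f x (by simpa using hk)]

theorem isPhiConservative_arrowCongr (w : A → M) (σ : Perm (Fin n)) :
    IsPhiConservative w (σ.arrowCongr (Equiv.refl A)) :=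
  fun x => Equiv.sum_comp σ.symm fun i => w (x i)

theorem applyAlong_trans_eq_conj (f : Perm (Fin m → A)) (ι : Fin m ↪ Fin n)
    (σ : Perm (Fin n)) :
    applyAlong f (ι.trans σ.toEmbedding) =
      σ.arrowCongr (Equiv.refl A) * applyAlong f ι * (σ.arrowCongr (Equiv.refl A))⁻¹ := by
  ext x k
  show applyAlong f (ι.trans σ.toEmbedding) x k = applyAlong f ι (x ∘ σ) (σ.symm k)
  by_cases hk : k ∈ Set.range (ι.trans σ.toEmbedding)
  · obtain ⟨j, rfl⟩ := hk
    rw [applyAlong_apply_embedding, Embedding.trans_apply, coe_toEmbedding, symm_apply_apply,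
      applyAlong_apply_embedding]
    rfl
  · have hk' : σ.symm k ∉ Set.range ι := fun ⟨j, hj⟩ =>
      hk ⟨j, σ.eq_symm_apply.1 hj⟩
    rw [applyAlong_apply_of_notMem f x hk, applyAlong_apply_of_notMem f _ hk']
    simp

theorem MonoidHom.map_applyAlong_eq {w : A → M} {G : Type*} [CommGroup G]
    (χ : fiberPreservingSubgroup (phiWeight w (n := n)) →* G) {f : Perm (Fin m → A)}
    (hf : IsPhiConservative w f) (ι ι' : Fin m ↪ Fin n) :
    χ ⟨applyAlong f ι, isPhiConservative_applyAlong hf ι⟩ =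
      χ ⟨applyAlong f ι', isPhiConservative_applyAlong hf ι'⟩ := by
  obtain ⟨σ, hσ⟩ := Perm.exists_extending_pair ι ι' ι.injective ι'.injective
  obtain rfl : ι' = ι.trans σ.toEmbedding := by ext j; simp [hσ]
  let ρ : fiberPreservingSubgroup (phiWeight w (n := n)) :=
    ⟨σ.arrowCongr (Equiv.refl A), isPhiConservative_arrowCongr w σ⟩
  have hconj : (⟨applyAlong f (ι.trans σ.toEmbedding), isPhiConservative_applyAlong hf _⟩ :
      fiberPreservingSubgroup (phiWeight w (n := n))) =
        ρ * ⟨applyAlong f ι, isPhiConservative_applyAlong hf ι⟩ * ρ⁻¹ :=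
    Subtype.ext (applyAlong_trans_eq_conj f ι σ)
  rw [hconj, map_mul, map_mul, map_inv, mul_inv_cancel_comm]

end Words

theorem phiConservative_not_finitely_generated_of_infiniteDimensional_general
    {A : Type*} [Fintype A] {M : Type*} [AddCommMonoid M]
    (w : A → M)
    (hdim : ∀ N : ℕ, ∃ (n : ℕ) (s : Finset M), N ≤ s.card ∧
      ∀ c ∈ s, ∃ x y : Fin n → A, x ≠ y ∧
        phiWeight w x = c ∧ phiWeight w y = c)
    (N : ℕ) (m : Fin N → ℕ) (g : ∀ i : Fin N, Equiv.Perm (Fin (m i) → A))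
    (hg : ∀ i : Fin N, IsPhiConservative w (g i)) :
    ∃ (n : ℕ) (f : Equiv.Perm (Fin n → A)), IsPhiConservative w f ∧
      f ∉ Subgroup.closure
        {σ : Equiv.Perm (Fin n → A) |
          ∃ (i : Fin N) (ι : Fin (m i) ↪ Fin n), σ = applyAlong (g i) ι} := by
  classical
  obtain ⟨n, s, hN, hs⟩ := hdim (N + 1)
  obtain ⟨t, hts, htN⟩ := Finset.exists_subset_card_eq hN
  let Ψ := fiberSigns (phiWeight w (n := n)) t
  have hgate : ∀ i, ∃ v,
      ∀ ι, Ψ ⟨applyAlong (g i) ι, isPhiConservative_applyAlong (hg i) ι⟩ = v :=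
    fun i => (isEmpty_or_nonempty (Fin (m i) ↪ Fin n)).elim (fun _ => ⟨1, isEmptyElim⟩)
      fun ⟨ι₀⟩ => ⟨_, fun ι => Ψ.map_applyAlong_eq (hg i) ι ι₀⟩
  choose v hv using hgate
  obtain ⟨u, hu⟩ : ∃ u, u ∉ Subgroup.closure (Set.range v) := by
    by_contra! h
    have hcard := Subgroup.card_closure_range_le_two_pow
      (fun u : t → ℤˣ => funext fun c => Int.units_sq (u c)) v
    have hG : Nat.card (t → ℤˣ) = 2 ^ (N + 1) := by simp [htN]
    rw [(Subgroup.eq_top_iff' _).2 h, Subgroup.card_top, hG, Fintype.card_fin] at hcard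
    exact (Nat.pow_lt_pow_right one_lt_two N.lt_succ_self).not_ge hcard
  obtain ⟨f, rfl⟩ := fiberSigns_surjective (fun c hc => hs c (hts hc)) u
  refine ⟨n, f, f.2, fun hf => hu ?_⟩
  have hle : Subgroup.closure
      {σ | ∃ (i : Fin N) (ι : Fin (m i) ↪ Fin n), σ = applyAlong (g i) ι} ≤
      ((Subgroup.closure (Set.range v)).comap Ψ).map (fiberPreservingSubgroup _).subtype := by
    refine Subgroup.closure_le _ |>.2 ?_
    rintro _ ⟨i, ι, rfl⟩
    exact ⟨_, Subgroup.subset_closure ⟨i, (hv i ι).symm⟩, rfl⟩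
  obtain ⟨f', hf', hff'⟩ := hle hf
  rwa [← Subtype.ext hff']

/-- **For infinite-dimensional weights, the φ-conservative revital is not finitely
generated** (Theorem 18 of the paper).  Let `A` be a finite type, `M` an additive
commutative monoid and `w : A → M` such that the induced weight is
*infinite-dimensional*: for every `N` there is an `n` such that at least `N` distinct
values `c : M` have a φ-weight class `{x : Fin n → A | ∑ i, w (x i) = c}` with at least
two elements.  Then for every finite family `g i` (for `i : Fin N`) of φ-conservative
gates, where `g i` is a φ-conservative permutation of `Fin (m i) → A`, there are
`n : ℕ` and a φ-conservative permutation `f` of `Fin n → A` not lying in the subgroup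
of `Perm (Fin n → A)` generated by the applications of the gates `g i` along injections
`Fin (m i) ↪ Fin n`. -/
theorem phiConservative_not_finitely_generated_of_infiniteDimensional
    {A : Type*} [Fintype A] [DecidableEq A] {M : Type*} [AddCommMonoid M]
    (w : A → M)
    (hdim : ∀ N : ℕ, ∃ (n : ℕ) (s : Finset M), N ≤ s.card ∧
      ∀ c ∈ s, ∃ x y : Fin n → A, x ≠ y ∧
        phiWeight w x = c ∧ phiWeight w y = c)
    (N : ℕ) (m : Fin N → ℕ) (g : ∀ i : Fin N, Equiv.Perm (Fin (m i) → A))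
    (hg : ∀ i : Fin N, IsPhiConservative w (g i)) :
    ∃ (n : ℕ) (f : Equiv.Perm (Fin n → A)), IsPhiConservative w f ∧
      f ∉ Subgroup.closure
        {σ : Equiv.Perm (Fin n → A) |
          ∃ (i : Fin N) (ι : Fin (m i) ↪ Fin n), σ = applyAlong (g i) ι} :=
  phiConservative_not_finitely_generated_of_infiniteDimensional_general w hdim N m g hg
end
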